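/- arXiv:2211.07762 — 3 statements merged into one kernel-verified Lean document; each statement's English description precedes it below -/
import Mathlib

section
/- Let β be the distortion coefficient associated with data (s, N) as in the context. Assume that 𝒟 := inf{θ > 0 : s(θ) = 0} < +∞ and that s is real analytic on [0,𝒟], i.e. s extends to a real-analytic function on an open interval containing [0,𝒟]. Then there exists N' ≥ N such that β_t(θ) ≥ t^{N'} for all t ∈ [0,1] and all θ ∈ [0,+∞]. -/
open MeasureTheory Filter Set Metric ENNReal Topology

noncomputable section

namespace GMMS

variable {X : Type*}

open Classical in
/-- The support of a Borel measure on a metric space: points all of whose balls have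
positive measure. -/
def mSupp [PseudoMetricSpace X] [MeasurableSpace X] (m : Measure X) : Set X :=
  {x : X | ∀ r : ℝ, 0 < r → 0 < m (Metric.ball x r)}

/-- A measure which is finite on every bounded set. -/
def FiniteOnBounded [PseudoMetricSpace X] [MeasurableSpace X] (m : Measure X) : Prop :=
  ∀ s : Set X, Bornology.IsBounded s → m s < ⊤

open Classical in
/-- The nonnegative part of an extended real number, in `[0,∞]`. -/
def epos (x : EReal) : ℝ≥0∞ := if x = ⊤ then ⊤ else ENNReal.ofReal x.toReal

/-- Integral of an `EReal`-valued function, defined as the difference of the lower integrals of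
the positive and negative parts (with the `EReal` convention `⊤ - ⊤ = ⊥`). -/
def eintegral {α : Type*} [MeasurableSpace α] (ν : Measure α) (f : α → EReal) : EReal :=
  ((∫⁻ a, epos (f a) ∂ν : ℝ≥0∞) : EReal) - ((∫⁻ a, epos (-(f a)) ∂ν : ℝ≥0∞) : EReal)

/-- `𝒟 = inf {θ > 0 | s θ = 0} ∈ (0,+∞]`. -/
def Dcal (s : ℝ → ℝ) : ℝ≥0∞ :=
  sInf (ENNReal.ofReal '' {θ : ℝ | 0 < θ ∧ s θ = 0})

/-- The distortion coefficient `β` associated with the data `(s, N)`: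
`β t 0 = t ^ N`, `β t θ = s (t θ) / s θ` for `0 < θ < 𝒟`, and
`β t θ = liminf_{φ → 𝒟⁻} s (t φ) / s φ` for `θ ≥ 𝒟`. -/
def beta (s : ℝ → ℝ) (N : ℝ) (t : ℝ) (θ : ℝ≥0∞) : ℝ≥0∞ :=
  if θ = 0 then ENNReal.ofReal (t ^ N)
  else if θ < Dcal s then ENNReal.ofReal (s (t * θ.toReal) / s θ.toReal)
  else Filter.liminf (fun φ : ℝ≥0∞ => ENNReal.ofReal (s (t * φ.toReal) / s φ.toReal))
      (nhdsWithin (Dcal s) (Set.Iio (Dcal s)))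

open Classical in
/-- The data `(s, N)` defining a distortion coefficient: `N ∈ [1,∞)`, `s` continuous on `[0,∞)`
with `s θ = c θ^N + o(θ^N)` as `θ → 0⁺`, for some `c > 0`. -/
structure DistortionData (s : ℝ → ℝ) (N : ℝ) : Prop where
  one_le : 1 ≤ N
  cont : ContinuousOn s (Set.Ici 0)
  asymp : ∃ c : ℝ, 0 < c ∧
    (fun θ : ℝ => s θ - c * θ ^ N) =o[nhdsWithin 0 (Set.Ioi 0)] (fun θ : ℝ => θ ^ N)

/-- The space of (constant-speed, defined on `[0,1]`) geodesics of a metric space. -/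
abbrev GeoSpace (X : Type*) [MetricSpace X] : Type _ :=
  {γ : C(unitInterval, X) //
    ∀ s t : unitInterval, dist (γ s) (γ t) = |(s : ℝ) - (t : ℝ)| * dist (γ 0) (γ 1)}

instance [MetricSpace X] : MeasurableSpace (GeoSpace X) := borel _

/-- Evaluation of a geodesic at time `t ∈ [0,1]`. -/
def geval [MetricSpace X] (γ : GeoSpace X) (t : ℝ) : X :=
  γ.1 (Set.projIcc 0 1 zero_le_one t)

/-- The squared quadratic Kantorovich-Rubinstein-Wasserstein transportation cost. -/
def W2sq [MetricSpace X] [MeasurableSpace X] (μ ν : Measure X) : ℝ≥0∞ :=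
  ⨅ (π : Measure (X × X)) (_ : π.map Prod.fst = μ) (_ : π.map Prod.snd = ν),
    ∫⁻ p, edist p.1 p.2 ^ 2 ∂π

/-- A `W₂`-geodesic: a curve of probability measures with finite second moment such that
`W₂(μ_s, μ_t) = |s - t| W₂(μ_0, μ_1)`. -/
structure IsW2Geo [MetricSpace X] [MeasurableSpace X] (μ : ℝ → Measure X) : Prop where
  prob : ∀ t ∈ Set.Icc (0:ℝ) 1, IsProbabilityMeasure (μ t)
  moment : ∀ t ∈ Set.Icc (0:ℝ) 1, ∃ x₀ : X, ∫⁻ x, edist x x₀ ^ 2 ∂(μ t) < ⊤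
  geo : ∀ s ∈ Set.Icc (0:ℝ) 1, ∀ t ∈ Set.Icc (0:ℝ) 1,
    W2sq (μ s) (μ t) = ENNReal.ofReal ((s - t) ^ 2) * W2sq (μ 0) (μ 1)

/-- Optimal dynamical plans from `μ0` to `μ1`. -/
def OptGeoSet [MetricSpace X] [MeasurableSpace X] (μ0 μ1 : Measure X) :
    Set (Measure (GeoSpace X)) :=
  {ν | IsProbabilityMeasure ν ∧
    (ν.map fun γ => (geval γ 0, geval γ 1)).map Prod.fst = μ0 ∧
    (ν.map fun γ => (geval γ 0, geval γ 1)).map Prod.snd = μ1 ∧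
    ∫⁻ p, edist p.1 p.2 ^ 2 ∂(ν.map fun γ => (geval γ 0, geval γ 1)) = W2sq μ0 μ1}

open Classical in
/-- The Boltzmann-Shannon relative entropy `Ent(μ|m) = ∫ ρ log ρ dm` if `μ = ρ m` with
`ρ log ρ ∈ L¹(m)`, and `+∞` otherwise. -/
def Ent [MeasurableSpace X] (μ m : Measure X) : EReal :=
  if μ ≪ m ∧
      Integrable (fun x => (μ.rnDeriv m x).toReal * Real.log (μ.rnDeriv m x).toReal) m
  then ((∫ x, (μ.rnDeriv m x).toReal * Real.log (μ.rnDeriv m x).toReal ∂m : ℝ) : EReal)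
  else (⊤ : EReal)

/-- The dimensional entropy `U_n(μ|m) = exp (-Ent(μ|m)/n)`, with value `0` when
`Ent(μ|m) = +∞`. -/
def UnE [MeasurableSpace X] (n : ℝ) (μ m : Measure X) : ℝ≥0∞ :=
  EReal.exp (((n⁻¹ : ℝ) : EReal) * (-(Ent μ m)))

/-- Probability measures with bounded support contained in `supp m`. -/
def Pbs [MetricSpace X] [MeasurableSpace X] (m : Measure X) : Set (Measure X) :=
  {μ | IsProbabilityMeasure μ ∧ Bornology.IsBounded (mSupp μ) ∧ mSupp μ ⊆ mSupp m}

/-- Probability measures with bounded support contained in `supp m` and finite entropy. -/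
def PbsStar [MetricSpace X] [MeasurableSpace X] (m : Measure X) : Set (Measure X) :=
  {μ | μ ∈ Pbs m ∧ Ent μ m ≠ ⊤}

/-- The coefficient `exp ((1/n) ∫ log (f γ) dν(γ))` appearing in the `CD(β,n)` inequality. -/
def cdCoeff [MetricSpace X] (n : ℝ) (ν : Measure (GeoSpace X)) (f : GeoSpace X → ℝ≥0∞) :
    ℝ≥0∞ :=
  EReal.exp (((n⁻¹ : ℝ) : EReal) * eintegral ν fun γ => ENNReal.log (f γ))

/-- The `CD` convexity inequality along the dynamical plan `ν`, for a coefficient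
`b : [0,1] × [0,∞] → [0,∞]` (with the conventions `∞ ⬝ 0 = 0` of `ℝ≥0∞`). -/
def CDineq [MetricSpace X] [MeasurableSpace X] (m : Measure X) (G : X → X → ℝ≥0∞)
    (b : ℝ → ℝ≥0∞ → ℝ≥0∞) (n : ℝ) (μ0 μ1 : Measure X) (ν : Measure (GeoSpace X)) : Prop :=
  ∀ t ∈ Set.Ioo (0:ℝ) 1,
    cdCoeff n ν (fun γ => b (1 - t) (G (geval γ 1) (geval γ 0))) * UnE n μ0 m
      + cdCoeff n ν (fun γ => b t (G (geval γ 0) (geval γ 1))) * UnE n μ1 m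
      ≤ UnE n (ν.map fun γ => geval γ t) m

/-- The curvature-dimension condition `CD(b, n)` for the gauge metric measure space
`(X, d, m, G)`. -/
def CD [MetricSpace X] [MeasurableSpace X] (m : Measure X) (G : X → X → ℝ≥0∞)
    (b : ℝ → ℝ≥0∞ → ℝ≥0∞) (n : ℝ) : Prop :=
  ∀ μ0 ∈ Pbs m, ∀ μ1 ∈ PbsStar m, mSupp μ0 ∩ mSupp μ1 = ∅ →
    ∃ ν ∈ OptGeoSet μ0 μ1, CDineq m G b n μ0 μ1 ν

/-- The strong curvature-dimension condition: the `CD` inequality holds along every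
optimal dynamical plan. -/
def CDStrong [MetricSpace X] [MeasurableSpace X] (m : Measure X) (G : X → X → ℝ≥0∞)
    (b : ℝ → ℝ≥0∞ → ℝ≥0∞) (n : ℝ) : Prop :=
  ∀ μ0 ∈ Pbs m, ∀ μ1 ∈ PbsStar m, mSupp μ0 ∩ mSupp μ1 = ∅ →
    ∀ ν ∈ OptGeoSet μ0 μ1, CDineq m G b n μ0 μ1 ν

/-- The measure contraction property `MCP(b)` for the gauge metric measure space
`(X, d, m, G)`. -/
def MCP [MetricSpace X] [MeasurableSpace X] (m : Measure X) (G : X → X → ℝ≥0∞)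
    (b : ℝ → ℝ≥0∞ → ℝ≥0∞) : Prop :=
  ∀ x ∈ mSupp m, ∀ μ1 ∈ PbsStar m, x ∉ mSupp μ1 →
    ∃ μ : ℝ → Measure X, IsW2Geo μ ∧ μ 0 = Measure.dirac x ∧ μ 1 = μ1 ∧
      ∀ t ∈ Set.Ioo (0:ℝ) 1, ∀ n : ℝ, 1 ≤ n →
        EReal.exp (((n⁻¹ : ℝ) : EReal) * eintegral μ1 fun y => ENNReal.log (b t (G x y)))
            * UnE n μ1 m
          ≤ UnE n (μ t) m

/-- The set of `t`-intermediate points between `A0` and `A1`. -/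
def Zt [MetricSpace X] (t : ℝ) (A0 A1 : Set X) : Set X :=
  {x | ∃ γ : GeoSpace X, geval γ 0 ∈ A0 ∧ geval γ 1 ∈ A1 ∧ geval γ t = x}

/-- The distortion coefficient `β_t(A0, A1)` between two sets. -/
def betaSet [MetricSpace X] [MeasurableSpace X] (m : Measure X) (G : X → X → ℝ≥0∞)
    (b : ℝ≥0∞ → ℝ≥0∞) (A0 A1 : Set X) : ℝ≥0∞ :=
  ⨆ (A0' : Set X) (_ : A0' ⊆ A0) (_ : A0'.Nonempty) (_ : m (A0 \ A0') = 0)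
    (A1' : Set X) (_ : A1' ⊆ A1) (_ : A1'.Nonempty) (_ : m (A1 \ A1') = 0),
    ⨅ (x0 : X) (_ : x0 ∈ A0' ∩ mSupp m) (x1 : X) (_ : x1 ∈ A1' ∩ mSupp m), b (G x0 x1)

/-- The "true" distortion coefficient of a metric measure space. -/
def trueBeta [MetricSpace X] [MeasurableSpace X] (m : Measure X) (t : ℝ) (x y : X) : ℝ≥0∞ :=
  Filter.limsup (fun r : ℝ => m (Zt t {x} (Metric.ball y r)) / m (Metric.ball y r))
    (nhdsWithin 0 (Set.Ioi 0))

/-- The `G`-diameter of a set. -/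
def diamG [MetricSpace X] [MeasurableSpace X] (m : Measure X) (G : X → X → ℝ≥0∞)
    (S : Set X) : ℝ≥0∞ :=
  ⨆ x ∈ S, essSup (fun y => G x y) (m.restrict (S \ {x}))

/-- The quantity `C_σ(x)` entering the definition of the geodesic dimension. -/
def Csig [MetricSpace X] [MeasurableSpace X] (m : Measure X) (σ : ℝ) (x : X) : ℝ≥0∞ :=
  ⨆ (A : Set X) (_ : MeasurableSet A) (_ : Bornology.IsBounded A) (_ : x ∉ A)
    (_ : 0 < m A) (_ : m A < ⊤),
    Filter.limsup (fun t : ℝ => ENNReal.ofReal (t ^ (-σ)) * m (Zt t {x} A) / m A)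
      (nhdsWithin 0 (Set.Ioi 0))

/-- The geodesic dimension at a point. -/
def dimGeo [MetricSpace X] [MeasurableSpace X] (m : Measure X) (x : X) : ℝ≥0∞ :=
  sInf (ENNReal.ofReal '' {σ : ℝ | 0 < σ ∧ Csig m σ x = ⊤})

/-- The geodesic dimension of a set. -/
def dimGeoS [MetricSpace X] [MeasurableSpace X] (m : Measure X) (S : Set X) : ℝ≥0∞ :=
  ⨆ x ∈ S, dimGeo m x

/-- The gauge `G` is meek. -/
def Meek [MetricSpace X] [MeasurableSpace X] (m : Measure X) (G : X → X → ℝ≥0∞) : Prop :=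
  ∀ x ∈ mSupp m, ∀ μ1 ∈ PbsStar m, x ∉ mSupp μ1 →
    ∀ ν ∈ OptGeoSet (Measure.dirac x) μ1,
      ∃ Γ : Set (GeoSpace X), MeasurableSet Γ ∧ ν Γ = 1 ∧
        ∀ γ ∈ Γ, ∀ t ∈ Set.Ioc (0:ℝ) 1,
          G (geval γ 0) (geval γ t) = ENNReal.ofReal t * G (geval γ 0) (geval γ 1)

/-- The measure `v_G(x₀, r, ρ)` of the intersection of a gauge sublevel set with a metric
ball. -/
def vG [MetricSpace X] [MeasurableSpace X] (m : Measure X) (G : X → X → ℝ≥0∞)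
    (x0 : X) (r ρ : ℝ) : ℝ≥0∞ :=
  m {x | G x0 x ≤ ENNReal.ofReal r ∧ dist x0 x ≤ ρ}

/-- `(supp m, d)` is a geodesic space: any two points of the support are joined by a geodesic
contained in the support. -/
def GeodesicSupp [MetricSpace X] [MeasurableSpace X] (m : Measure X) : Prop :=
  ∀ x ∈ mSupp m, ∀ y ∈ mSupp m, ∃ γ : GeoSpace X,
    geval γ 0 = x ∧ geval γ 1 = y ∧ ∀ t ∈ Set.Icc (0:ℝ) 1, geval γ t ∈ mSupp m

private lemma distortion_aux (s : ℝ → ℝ) (N : ℝ)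
    (hsN : DistortionData s N) (hD : Dcal s < ⊤)
    (hanal : ∃ U : Set ℝ, IsOpen U ∧ Set.Icc (0:ℝ) (Dcal s).toReal ⊆ U ∧
      ∃ g : ℝ → ℝ, AnalyticOnNhd ℝ g U ∧ Set.EqOn s g (Set.Icc (0:ℝ) (Dcal s).toReal)) :
    ∃ N' : ℝ, N ≤ N' ∧ 0 < Dcal s ∧
      (∀ x ∈ Set.Ioo (0:ℝ) (Dcal s).toReal, 0 < s x) ∧
      (∀ t ∈ Set.Ioc (0:ℝ) 1, ∀ x ∈ Set.Ioo (0:ℝ) (Dcal s).toReal,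
        t ^ N' * s x ≤ s (t * x)) := by
  obtain ⟨U, hUo, hUsub, g, hg, hsg⟩ := hanal
  obtain ⟨c, hc, ho⟩ := hsN.asymp
  -- `s` is positive near `0⁺`
  have hev : ∀ᶠ θ in 𝓝[>] (0:ℝ), 0 < s θ := by
    filter_upwards [ho.def (half_pos hc), self_mem_nhdsWithin] with θ h hθ
    have hθ' : (0:ℝ) < θ := hθ
    have hp : 0 < θ ^ N := Real.rpow_pos_of_pos hθ' N
    rw [Real.norm_eq_abs, Real.norm_eq_abs, abs_of_pos hp] at h
    have h1 := (abs_le.1 h).1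
    nlinarith
  obtain ⟨ε, hεmem, hIoc⟩ := mem_nhdsGT_iff_exists_Ioc_subset.1 hev
  have hε : (0:ℝ) < ε := hεmem
  set Z : Set ℝ := {θ : ℝ | 0 < θ ∧ s θ = 0} with hZdef
  have hZgt : ∀ θ ∈ Z, ε < θ := by
    intro θ hθ
    by_contra h
    push_neg at h
    have hp : 0 < s θ := hIoc ⟨hθ.1, h⟩
    exact hp.ne' hθ.2
  have hZne : Z.Nonempty := by
    by_contra h
    rw [Set.not_nonempty_iff_eq_empty] at h
    rw [Dcal] at hD
    rw [show {θ : ℝ | 0 < θ ∧ s θ = 0} = ∅ from h] at hD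
    simp at hD
  have hZbdd : BddBelow Z := ⟨0, fun θ hθ => hθ.1.le⟩
  have hRε : ε ≤ sInf Z := le_csInf hZne fun θ hθ => (hZgt θ hθ).le
  have hDcal : Dcal s = ENNReal.ofReal (sInf Z) :=
    (Monotone.map_csInf_of_continuousAt ENNReal.continuous_ofReal.continuousAt
      (fun _ _ h => ENNReal.ofReal_le_ofReal h) hZne hZbdd).symm
  have hR0 : 0 < sInf Z := lt_of_lt_of_le hε hRε
  set D : ℝ := (Dcal s).toReal with hDdef
  have hDR : D = sInf Z := by rw [hDdef, hDcal, ENNReal.toReal_ofReal hR0.le]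
  have hD0 : 0 < D := hDR ▸ hR0
  have hDcalpos : 0 < Dcal s := by
    rw [hDcal]; exact ENNReal.ofReal_pos.2 hR0
  -- `s D = 0`
  have hZclosed : IsClosed Z := by
    have : Z = Set.Ici ε ∩ s ⁻¹' {0} := by
      ext θ
      constructor
      · exact fun hθ => ⟨(hZgt θ hθ).le, hθ.2⟩
      · exact fun hθ => ⟨lt_of_lt_of_le hε hθ.1, hθ.2⟩
    rw [this]
    exact ContinuousOn.preimage_isClosed_of_isClosed
      (hsN.cont.mono fun x hx => le_trans hε.le hx) isClosed_Ici isClosed_singleton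
  have hsD : s D = 0 := by
    have := hZclosed.csInf_mem hZne hZbdd
    rw [← hDR] at this
    exact this.2
  -- `s > 0` on `(0, D)`
  have hpos : ∀ x ∈ Set.Ioo (0:ℝ) D, 0 < s x := by
    intro x hx
    have hne : s x ≠ 0 := by
      intro h
      have : sInf Z ≤ x := csInf_le hZbdd ⟨hx.1, h⟩
      rw [← hDR] at this
      exact absurd this (not_le.2 hx.2)
    by_contra h
    push_neg at h
    have hxneg : s x < 0 := lt_of_le_of_ne h hne
    set y : ℝ := min ε x with hy
    have hy0 : 0 < y := lt_min hε hx.1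
    have hyx : y ≤ x := min_le_right _ _
    have hsy : 0 < s y := hIoc ⟨hy0, min_le_left _ _⟩
    have hcont : ContinuousOn s (Set.Icc y x) := hsN.cont.mono fun z hz => le_trans hy0.le hz.1
    have h0mem : (0:ℝ) ∈ Set.Icc (s x) (s y) := ⟨hxneg.le, hsy.le⟩
    obtain ⟨z, hz, hz0⟩ := intermediate_value_Icc' hyx hcont h0mem
    have hzZ : z ∈ Z := ⟨lt_of_lt_of_le hy0 hz.1, hz0⟩
    have : sInf Z ≤ z := csInf_le hZbdd hzZ
    rw [← hDR] at this
    exact absurd (lt_of_le_of_lt (this.trans hz.2) hx.2) (lt_irrefl _)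
  -- facts about `g`
  have h0U : (0:ℝ) ∈ U := hUsub ⟨le_refl 0, hD0.le⟩
  have hDU : D ∈ U := hUsub ⟨hD0.le, le_refl D⟩
  have hgpos : ∀ x ∈ Set.Ioo (0:ℝ) D, 0 < g x := by
    intro x hx
    rw [← hsg ⟨hx.1.le, hx.2.le⟩]
    exact hpos x hx
  have hgD : g D = 0 := by rw [← hsg ⟨hD0.le, le_refl D⟩]; exact hsD
  -- order of `g` at `0`
  have ha0 : AnalyticAt ℝ g 0 := hg 0 h0U
  have hfreq0 : ¬ ∀ᶠ z in 𝓝 (0:ℝ), g z = 0 := by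
    intro h
    rw [Metric.eventually_nhds_iff] at h
    obtain ⟨δ, hδ, h⟩ := h
    set x : ℝ := min (δ/2) (D/2) with hxdef
    have hx : x ∈ Set.Ioo (0:ℝ) D := ⟨lt_min (by linarith) (by linarith),
      lt_of_le_of_lt (min_le_right _ _) (by linarith)⟩
    have hx0 : g x = 0 := by
      apply h
      rw [dist_zero_right, Real.norm_eq_abs, abs_of_pos hx.1]
      exact lt_of_le_of_lt (min_le_left _ _) (by linarith)
    exact (hgpos x hx).ne' hx0
  have hord0 : analyticOrderAt g 0 ≠ ⊤ := fun h => hfreq0 (analyticOrderAt_eq_top.1 h)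
  obtain ⟨n, hn⟩ : ∃ n : ℕ, analyticOrderAt g 0 = (n : ℕ∞) :=
    Option.ne_none_iff_exists.1 hord0 |>.imp fun n h => h.symm
  obtain ⟨u, hu_an, hu0, hu_ev⟩ := (ha0.analyticOrderAt_eq_natCast (n := n)).1 hn
  have hu_eq : g =ᶠ[𝓝 (0:ℝ)] fun z => z ^ n * u z := by
    filter_upwards [hu_ev] with z hz
    simpa [smul_eq_mul] using hz
  -- order of `g` at `D`
  have haD : AnalyticAt ℝ g D := hg D hDU
  have hfreqD : ¬ ∀ᶠ z in 𝓝 D, g z = 0 := by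
    intro h
    rw [Metric.eventually_nhds_iff] at h
    obtain ⟨δ, hδ, h⟩ := h
    set x : ℝ := D - min δ D / 2 with hxdef
    have hmin : 0 < min δ D := lt_min hδ hD0
    have hminD : min δ D ≤ D := min_le_right _ _
    have hx : x ∈ Set.Ioo (0:ℝ) D := ⟨by simp only [hxdef]; linarith, by simp only [hxdef]; linarith⟩
    have hx0 : g x = 0 := by
      apply h
      rw [Real.dist_eq, hxdef]
      rw [show D - min δ D / 2 - D = -(min δ D / 2) by ring, abs_neg,
        abs_of_pos (by linarith)]
      exact lt_of_le_of_lt (by linarith [min_le_left δ D] : min δ D / 2 ≤ δ / 2) (by linarith)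
    exact (hgpos x hx).ne' hx0
  have hordD : analyticOrderAt g D ≠ ⊤ := fun h => hfreqD (analyticOrderAt_eq_top.1 h)
  obtain ⟨p, hp⟩ : ∃ p : ℕ, analyticOrderAt g D = (p : ℕ∞) :=
    Option.ne_none_iff_exists.1 hordD |>.imp fun n h => h.symm
  obtain ⟨v, hv_an, hvD, hv_ev⟩ := (haD.analyticOrderAt_eq_natCast (n := p)).1 hp
  have hv_eq : g =ᶠ[𝓝 D] fun z => (z - D) ^ p * v z := by
    filter_upwards [hv_ev] with z hz
    simpa [smul_eq_mul] using hz
  have hp1 : 1 ≤ p := by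
    rcases Nat.eq_zero_or_pos p with h | h
    · exfalso
      have := hv_eq.self_of_nhds
      rw [hgD, h] at this
      simp at this
      exact hvD this.symm
    · exact h
  -- differentiability of `g`
  have hdiff : ∀ x ∈ U, DifferentiableAt ℝ g x := fun x hx => (hg x hx).differentiableAt
  have hderiv_cont : ContinuousOn (deriv g) U := hg.deriv.continuousOn
  -- bound near `0`: eventually `x * deriv g x ≤ (n+1) * g x` on the right of 0
  have hu_nbhd : ∀ᶠ x in 𝓝 (0:ℝ), AnalyticAt ℝ u x := hu_an.eventually_analyticAt
  obtain ⟨V, hV_mem, hV⟩ := hu_nbhd.exists_mem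
  obtain ⟨V', hV'sub, hV'open, hV'0⟩ := _root_.mem_nhds_iff.1 hV_mem
  have hu_onV : AnalyticOnNhd ℝ u V' := fun x hx => hV x (hV'sub hx)
  have hu'_cont : ContinuousAt (deriv u) 0 :=
    (hu_onV.deriv.continuousOn.continuousAt (hV'open.mem_nhds hV'0))
  have hu_cont : ContinuousAt u 0 := hu_an.continuousAt
  have hupos : 0 < u 0 := by
    rcases hu0.lt_or_gt with hneg | hpos
    · exfalso
      have hevu : ∀ᶠ x in 𝓝 (0:ℝ), u x < 0 := hu_cont.eventually_lt_const hneg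
      obtain ⟨W, hW_mem, hW⟩ := (hu_eq.and hevu).exists_mem
      rw [Metric.mem_nhds_iff] at hW_mem
      obtain ⟨δ, hδ, hball⟩ := hW_mem
      set x : ℝ := min (δ/2) (D/2) with hxdef
      have hx : x ∈ Set.Ioo (0:ℝ) D := ⟨lt_min (by linarith) (by linarith),
        lt_of_le_of_lt (min_le_right _ _) (by linarith)⟩
      have hxW : x ∈ W := hball (by
        rw [Metric.mem_ball, dist_zero_right, Real.norm_eq_abs, abs_of_pos hx.1]
        exact lt_of_le_of_lt (min_le_left _ _) (by linarith))
      obtain ⟨he, hu_neg⟩ := hW x hxW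
      have : g x ≤ 0 := by
        rw [he]
        exact mul_nonpos_of_nonneg_of_nonpos (pow_nonneg hx.1.le n) hu_neg.le
      exact absurd (hgpos x hx) (not_lt.2 this)
    · exact hpos
  have hkey0 : ∀ᶠ x in 𝓝[>] (0:ℝ), x * deriv g x ≤ ((n : ℝ) + 1) * g x := by
    have hgd : ∀ᶠ x in 𝓝 (0:ℝ), deriv g x = (n : ℝ) * x ^ (n-1) * u x + x ^ n * deriv u x := by
      filter_upwards [hu_eq.deriv, hu_nbhd] with x hx hx2
      rw [hx]
      exact ((hasDerivAt_pow n x).mul hx2.differentiableAt.hasDerivAt).deriv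
    have hposev : ∀ᶠ x in 𝓝 (0:ℝ), 0 < u x - x * deriv u x := by
      have hc : ContinuousAt (fun x : ℝ => u x - x * deriv u x) 0 :=
        hu_cont.sub (continuousAt_id.mul hu'_cont)
      have : (fun x : ℝ => u x - x * deriv u x) 0 = u 0 := by simp
      exact hc.eventually_const_lt (by rw [this]; exact hupos)
    filter_upwards [eventually_nhdsWithin_of_eventually_nhds hgd,
      eventually_nhdsWithin_of_eventually_nhds hu_eq,
      eventually_nhdsWithin_of_eventually_nhds hposev, self_mem_nhdsWithin]
      with x hder heq hposx hx0
    have hx0' : (0:ℝ) < x := hx0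
    have hxn : (0:ℝ) < x ^ n := pow_pos hx0' n
    have hfac : (n : ℝ) * (x * x ^ (n-1)) = (n : ℝ) * x ^ n := by
      rcases n with _ | m
      · simp
      · rw [Nat.succ_sub_one, ← pow_succ']
    have hxu : x * deriv u x ≤ u x := by linarith
    calc x * deriv g x = (n : ℝ) * (x * x ^ (n-1)) * u x + x ^ n * (x * deriv u x) := by
          rw [hder]; ring
      _ = (n : ℝ) * x ^ n * u x + x ^ n * (x * deriv u x) := by rw [hfac]
      _ ≤ (n : ℝ) * x ^ n * u x + x ^ n * u x := by
          have := mul_le_mul_of_nonneg_left hxu hxn.le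
          linarith
      _ = ((n : ℝ) + 1) * (x ^ n * u x) := by ring
      _ = ((n : ℝ) + 1) * g x := by rw [heq]
  -- bound near `D`: eventually `deriv g x ≤ 0` on the left of `D`
  have hvD_cont : ContinuousAt v D := hv_an.continuousAt
  obtain ⟨Vd, hVd_mem, hVd⟩ := hv_an.eventually_analyticAt.exists_mem
  obtain ⟨Vd', hVd'sub, hVd'open, hVd'D⟩ := _root_.mem_nhds_iff.1 hVd_mem
  have hv_onV : AnalyticOnNhd ℝ v Vd' := fun x hx => hVd x (hVd'sub hx)
  have hv'_cont : ContinuousAt (deriv v) D :=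
    hv_onV.deriv.continuousOn.continuousAt (hVd'open.mem_nhds hVd'D)
  have hvsign : 0 < (-1:ℝ) ^ p * v D := by
    have hevpos : ∀ᶠ x in 𝓝[<] D, 0 < (-1:ℝ) ^ p * v x := by
      filter_upwards [eventually_nhdsWithin_of_eventually_nhds hv_eq,
        eventually_nhdsWithin_of_eventually_nhds (eventually_gt_nhds hD0),
        self_mem_nhdsWithin] with x heq hx0 hxD
      have hxD' : x < D := hxD
      have hgx : 0 < g x := hgpos x ⟨hx0, hxD'⟩
      rw [heq] at hgx
      have hfac : (x - D) ^ p = (-1:ℝ) ^ p * (D - x) ^ p := by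
        rw [← neg_pow]; ring_nf
      rw [hfac] at hgx
      have hDx : (0:ℝ) < (D - x) ^ p := pow_pos (by linarith) p
      nlinarith
    have hlim : Filter.Tendsto (fun x => (-1:ℝ) ^ p * v x) (𝓝[<] D) (𝓝 ((-1:ℝ) ^ p * v D)) :=
      ((continuousAt_const.mul hvD_cont).continuousWithinAt).tendsto
    have hge : 0 ≤ (-1:ℝ) ^ p * v D :=
      ge_of_tendsto hlim (hevpos.mono fun x hx => hx.le)
    rcases hge.lt_or_eq with h | h
    · exact h
    · exfalso
      have : v D = 0 := by
        have hne : ((-1:ℝ) ^ p) ≠ 0 := by positivity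
        field_simp at h
        exact (mul_eq_zero.1 h.symm).resolve_left hne
      exact hvD this
  have hkeyD : ∀ᶠ x in 𝓝[<] D, deriv g x ≤ 0 := by
    have hgd : ∀ᶠ x in 𝓝 D, deriv g x =
        (x - D) ^ (p-1) * ((p : ℝ) * v x + (x - D) * deriv v x) := by
      filter_upwards [hv_eq.deriv, hv_an.eventually_analyticAt] with x hx hx2
      rw [hx]
      have hd : HasDerivAt (fun z => (z - D) ^ p * v z)
          ((p : ℝ) * (x - D) ^ (p-1) * v x + (x - D) ^ p * deriv v x) x := by
        have h1 : HasDerivAt (fun z : ℝ => (z - D) ^ p) ((p : ℝ) * (x - D) ^ (p-1) * 1) x :=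
          ((hasDerivAt_pow p (x - D)).comp x ((hasDerivAt_id x).sub_const D) : )
        have h2 := h1.mul hx2.differentiableAt.hasDerivAt
        simp only [mul_one] at h2
        exact h2
      rw [hd.deriv]
      have hsplit : (x - D) ^ p = (x - D) ^ (p-1) * (x - D) := by
        conv_lhs => rw [show p = (p-1) + 1 from (Nat.succ_pred_eq_of_pos hp1).symm]
        rw [pow_succ]
      rw [hsplit]; ring
    have hwlim : Filter.Tendsto (fun x => (-1:ℝ) ^ (p-1) * ((p : ℝ) * v x + (x - D) * deriv v x))
        (𝓝 D) (𝓝 ((-1:ℝ) ^ (p-1) * ((p : ℝ) * v D + 0 * deriv v D))) := by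
      apply Filter.Tendsto.const_mul
      apply Filter.Tendsto.add
      · exact (continuousAt_const.mul hvD_cont).tendsto
      · have : Filter.Tendsto (fun x : ℝ => x - D) (𝓝 D) (𝓝 (D - D)) :=
          (continuousAt_id.sub continuousAt_const).tendsto
        rw [sub_self] at this
        exact (this.mul hv'_cont).congr' (by rfl) |>.congr (fun x => rfl)
    have hwneg : (-1:ℝ) ^ (p-1) * ((p : ℝ) * v D + 0 * deriv v D) < 0 := by
      have hfac : (-1:ℝ) ^ (p-1) = -((-1:ℝ) ^ p) := by
        conv_rhs => rw [show p = (p-1) + 1 from (Nat.succ_pred_eq_of_pos hp1).symm]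
        rw [pow_succ]; ring
      rw [hfac]
      have hp0 : (0:ℝ) < (p:ℝ) := by exact_mod_cast hp1
      nlinarith
    have hwev : ∀ᶠ x in 𝓝 D, (-1:ℝ) ^ (p-1) * ((p : ℝ) * v x + (x - D) * deriv v x) < 0 :=
      hwlim.eventually (eventually_lt_nhds hwneg)
    filter_upwards [eventually_nhdsWithin_of_eventually_nhds hgd,
      eventually_nhdsWithin_of_eventually_nhds hwev, self_mem_nhdsWithin] with x hder hw hxD
    have hxD' : x < D := hxD
    rw [hder]
    have hfac : (x - D) ^ (p-1) = (-1:ℝ) ^ (p-1) * (D - x) ^ (p-1) := by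
      rw [← neg_pow]; ring_nf
    rw [hfac]
    have h1 : (0:ℝ) ≤ (D - x) ^ (p-1) := pow_nonneg (by linarith) _
    nlinarith
  -- combine into a global bound on `(0, D)`
  obtain ⟨aa, haa, hasub⟩ := mem_nhdsGT_iff_exists_Ioc_subset.1 hkey0
  obtain ⟨bb, hbb, hbsub⟩ := mem_nhdsLT_iff_exists_Ico_subset.1 hkeyD
  have haa0 : (0:ℝ) < aa := haa
  have hbbD : bb < D := hbb
  have hKU : Set.Icc aa bb ⊆ U := fun x hx => hUsub ⟨le_trans haa0.le hx.1, le_trans hx.2 hbbD.le⟩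
  have hKIoo : Set.Icc aa bb ⊆ Set.Ioo 0 D := fun x hx =>
    ⟨lt_of_lt_of_le haa0 hx.1, lt_of_le_of_lt hx.2 hbbD⟩
  have hhcont : ContinuousOn (fun x => x * deriv g x / g x) (Set.Icc aa bb) := by
    apply ContinuousOn.div
    · exact (continuousOn_id.mul (hderiv_cont.mono hKU))
    · exact hg.continuousOn.mono hKU
    · exact fun x hx => (hgpos x (hKIoo hx)).ne'
  obtain ⟨C, hC⟩ := isCompact_Icc.exists_bound_of_continuousOn hhcont
  set N' : ℝ := max N (max ((n : ℝ) + 1) (max C 0)) with hN'def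
  have hNN' : N ≤ N' := le_max_left _ _
  have hN'n : (n : ℝ) + 1 ≤ N' := le_trans (le_max_left _ _) (le_max_right _ _)
  have hN'C : C ≤ N' := le_trans (le_trans (le_max_left _ _) (le_max_right _ _)) (le_max_right _ _)
  have hN'0 : 0 < N' := lt_of_lt_of_le (by positivity : (0:ℝ) < (n:ℝ)+1) hN'n
  have keyIneq : ∀ x ∈ Set.Ioo (0:ℝ) D, x * deriv g x ≤ N' * g x := by
    intro x hx
    have hgx : 0 < g x := hgpos x hx
    rcases le_or_gt x aa with h1 | h1
    · exact le_trans (hasub ⟨hx.1, h1⟩) (mul_le_mul_of_nonneg_right hN'n hgx.le)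
    rcases le_or_gt bb x with h2 | h2
    · have hd := hbsub ⟨h2, hx.2⟩
      exact le_trans (mul_nonpos_of_nonneg_of_nonpos hx.1.le hd) (by positivity)
    · have hxK : x ∈ Set.Icc aa bb := ⟨h1.le, h2.le⟩
      have hCx := hC x hxK
      rw [Real.norm_eq_abs] at hCx
      have hdiv : x * deriv g x / g x ≤ N' := le_trans (abs_le.1 hCx).2 hN'C
      calc x * deriv g x = x * deriv g x / g x * g x := by field_simp
        _ ≤ N' * g x := mul_le_mul_of_nonneg_right hdiv hgx.le
  -- `q x = g x / x ^ N'` is antitone on `(0, D)`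
  set q : ℝ → ℝ := fun x => g x / x ^ N' with hqdef
  have hq : ∀ x ∈ Set.Ioo (0:ℝ) D, HasDerivAt q
      ((deriv g x * x ^ N' - g x * (N' * x ^ (N' - 1))) / (x ^ N') ^ 2) x := by
    intro x hx
    exact ((hdiff x (hUsub ⟨hx.1.le, hx.2.le⟩)).hasDerivAt).div
      (Real.hasDerivAt_rpow_const (Or.inl hx.1.ne'))
      (Real.rpow_pos_of_pos hx.1 N').ne'
  have hq' : ∀ x ∈ Set.Ioo (0:ℝ) D, deriv q x ≤ 0 := by
    intro x hx
    rw [(hq x hx).deriv]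
    apply div_nonpos_of_nonpos_of_nonneg _ (sq_nonneg _)
    have e2 : (0:ℝ) < x ^ (N' - 1) := Real.rpow_pos_of_pos hx.1 _
    have e1 : x ^ N' = x ^ (N' - 1) * x := by
      rw [Real.rpow_sub_one hx.1.ne']
      rw [div_mul_cancel₀ _ hx.1.ne']
    have hint := mul_le_mul_of_nonneg_right (keyIneq x hx) e2.le
    rw [e1]
    nlinarith [hint]
  have hanti : AntitoneOn q (Set.Ioo 0 D) := by
    apply antitoneOn_of_deriv_nonpos (convex_Ioo 0 D)
    · exact fun x hx => (hq x hx).continuousAt.continuousWithinAt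
    · intro x hx
      rw [interior_Ioo] at hx
      exact (hq x hx).differentiableAt.differentiableWithinAt
    · intro x hx
      rw [interior_Ioo] at hx
      exact hq' x hx
  -- conclusion
  refine ⟨N', hNN', hDcalpos, hpos, ?_⟩
  intro t ht x hx
  have htx : t * x ∈ Set.Ioo (0:ℝ) D :=
    ⟨mul_pos ht.1 hx.1, lt_of_le_of_lt (mul_le_of_le_one_left hx.1.le ht.2) hx.2⟩
  have hle : t * x ≤ x := mul_le_of_le_one_left hx.1.le ht.2
  have hmono := hanti htx hx hle
  rw [hqdef] at hmono
  simp only at hmono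
  have hxp : (0:ℝ) < x ^ N' := Real.rpow_pos_of_pos hx.1 N'
  have htxp : (0:ℝ) < (t * x) ^ N' := Real.rpow_pos_of_pos htx.1 N'
  rw [div_le_div_iff₀ hxp htxp] at hmono
  have hmul : (t * x) ^ N' = t ^ N' * x ^ N' := Real.mul_rpow ht.1.le hx.1.le
  rw [hmul] at hmono
  have hsx : s x = g x := hsg ⟨hx.1.le, hx.2.le⟩
  have hstx : s (t * x) = g (t * x) := hsg ⟨htx.1.le, htx.2.le⟩
  rw [hsx, hstx]
  nlinarith



/-- If `𝒟 < ∞` and `s` is real analytic on `[0, 𝒟]`, then there exists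
`N' ≥ N` with `β_t(θ) ≥ t ^ N'` for all `t ∈ [0,1]` and `θ ∈ [0,∞]`. -/
theorem distortion_coefficient_ge_pow_of_analytic (s : ℝ → ℝ) (N : ℝ)
    (hsN : DistortionData s N) (hD : Dcal s < ⊤)
    (hanal : ∃ U : Set ℝ, IsOpen U ∧ Set.Icc (0:ℝ) (Dcal s).toReal ⊆ U ∧
      ∃ g : ℝ → ℝ, AnalyticOnNhd ℝ g U ∧ Set.EqOn s g (Set.Icc (0:ℝ) (Dcal s).toReal)) :
    ∃ N' : ℝ, N ≤ N' ∧ ∀ t ∈ Set.Icc (0:ℝ) 1, ∀ θ : ℝ≥0∞,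
      ENNReal.ofReal (t ^ N') ≤ beta s N t θ := by
  obtain ⟨N', hNN', hDcalpos, hpos, hmain⟩ := distortion_aux s N hsN hD hanal
  have hN1 : (1:ℝ) ≤ N' := le_trans hsN.one_le hNN'
  refine ⟨N', hNN', ?_⟩
  intro t ht θ
  rcases eq_or_lt_of_le ht.1 with rfl | ht0
  · rw [Real.zero_rpow (by linarith : N' ≠ 0)]
    simp
  have hcase : ∀ φ : ℝ≥0∞, φ ≠ 0 → φ < Dcal s →
      ENNReal.ofReal (t ^ N') ≤ ENNReal.ofReal (s (t * φ.toReal) / s φ.toReal) := by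
    intro φ hφ0 hφD
    have hφtop : φ ≠ ⊤ := (hφD.trans hD).ne
    have hφr : φ.toReal ∈ Set.Ioo (0:ℝ) (Dcal s).toReal :=
      ⟨ENNReal.toReal_pos hφ0 hφtop, (ENNReal.toReal_lt_toReal hφtop hD.ne).2 hφD⟩
    apply ENNReal.ofReal_le_ofReal
    rw [le_div_iff₀ (hpos _ hφr)]
    exact hmain t ⟨ht0, ht.2⟩ _ hφr
  by_cases hθ0 : θ = 0
  · subst hθ0
    simp only [beta, if_pos rfl]
    exact ENNReal.ofReal_le_ofReal (Real.rpow_le_rpow_of_exponent_ge ht0 ht.2 hNN')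
  by_cases hθD : θ < Dcal s
  · simp only [beta, if_neg hθ0, if_pos hθD]
    exact hcase θ hθ0 hθD
  · simp only [beta, if_neg hθ0, if_neg hθD]
    refine Filter.le_liminf_of_le Filter.isCobounded_ge_of_top ?_
    filter_upwards [self_mem_nhdsWithin,
      eventually_nhdsWithin_of_eventually_nhds (eventually_gt_nhds hDcalpos)] with φ h1 h2
    exact hcase φ (ne_of_gt h2) h1


end GMMS
end
end

section
/- Generalized Brunn–Minkowski inequality: let (X,d,m,G) be a gauge metric measure space satisfying CD(β,n) for some n ∈ [1,∞) and a distortion coefficient β as in the context. Let A_0, A_1 ⊆ X be Borel sets with m(A_0) > 0, m(A_1) > 0 and m(A_0 ∩ A_1) = 0. Then for every t ∈ (0,1): m̄(A_t)^{1/n} ≥ β_{1−t}(A_1,A_0)^{1/n}·m(A_0)^{1/n} + β_t(A_0,A_1)^{1/n}·m(A_1)^{1/n}, where A_t = Z_t(A_0,A_1) is the set of t-intermediate points and with the convention 0·∞ = 0. -/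
open MeasureTheory Filter Set Metric ENNReal Topology

noncomputable section

namespace GMMS

variable {X : Type*}

section Helpers
set_option linter.unusedSectionVars false
set_option linter.unusedTactic false
set_option linter.deprecated false

variable {X : Type*} [MetricSpace X] [MeasurableSpace X] [BorelSpace X]

instance : BorelSpace (GeoSpace X) := ⟨rfl⟩

lemma continuous_geval (t : ℝ) : Continuous (fun γ : GeoSpace X => geval γ t) :=
  (continuous_eval_const _).comp continuous_subtype_val

lemma measurable_geval (t : ℝ) : Measurable (fun γ : GeoSpace X => geval γ t) :=
  (continuous_geval t).measurable

lemma isClosed_mSupp (m : Measure X) : IsClosed (mSupp m) := by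
  rw [← isOpen_compl_iff, Metric.isOpen_iff]
  intro x hx
  simp only [mem_compl_iff, mSupp, mem_setOf_eq, not_forall, not_lt] at hx
  obtain ⟨r, hr, h0⟩ := hx
  refine ⟨r / 2, by positivity, fun y hy => ?_⟩
  simp only [mem_compl_iff, mSupp, mem_setOf_eq, not_forall, not_lt]
  refine ⟨r / 2, by positivity, ?_⟩
  refine le_trans (measure_mono fun z hz => ?_) h0
  have : dist z y < r / 2 := hz
  have hxy : dist y x < r / 2 := hy
  simp only [mem_ball] at *
  linarith [dist_triangle z y x]

lemma measure_compl_mSupp [TopologicalSpace.SeparableSpace X] (m : Measure X) :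
    m (mSupp m)ᶜ = 0 := by
  haveI : SecondCountableTopology X := UniformSpace.secondCountable_of_separable X
  have h : ∀ x : ((mSupp m)ᶜ : Set X), ∃ r : ℝ, 0 < r ∧ m (ball (x : X) r) = 0 := by
    rintro ⟨x, hx⟩
    simp only [mem_compl_iff, mSupp, mem_setOf_eq, not_forall, not_lt] at hx
    obtain ⟨r, hr, h0⟩ := hx
    exact ⟨r, hr, le_antisymm h0 zero_le⟩
  choose r hr hr0 using h
  obtain ⟨T, hTc, hTU⟩ := TopologicalSpace.isOpen_iUnion_countable
    (fun x : ((mSupp m)ᶜ : Set X) => ball (x : X) (r x)) (fun _ => isOpen_ball)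
  have hcover : (mSupp m)ᶜ ⊆ ⋃ i ∈ T, ball (i : X) (r i) := by
    rw [hTU]
    exact fun x hx => mem_iUnion.2 ⟨⟨x, hx⟩, mem_ball_self (hr ⟨x, hx⟩)⟩
  refine measure_mono_null hcover ?_
  exact (measure_biUnion_null_iff hTc).2 fun i _ => hr0 i

lemma sigmaFinite_of_finiteOnBounded (m : Measure X) (hm : FiniteOnBounded m) (x₀ : X) :
    SigmaFinite m := by
  refine ⟨⟨⟨fun k => ball x₀ (k + 1), fun _ => trivial,
    fun k => hm _ isBounded_ball, ?_⟩⟩⟩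
  ext x
  simp only [mem_iUnion, mem_ball, mem_univ, iff_true]
  obtain ⟨k, hk⟩ := exists_nat_gt (dist x x₀)
  exact ⟨k, by push_cast; linarith⟩

lemma exists_closed_bounded_subset (m : Measure X) (hm : FiniteOnBounded m) (x₀ : X)
    {E : Set X} (hE : MeasurableSet E) {r : ℝ≥0∞} (hr : r < m E) :
    ∃ K, K ⊆ E ∧ IsClosed K ∧ Bornology.IsBounded K ∧ r < m K ∧ m K < ⊤ := by
  have hcov : E = ⋃ k : ℕ, E ∩ ball x₀ (k + 1) := by
    ext x
    simp only [mem_iUnion, mem_inter_iff, mem_ball]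
    constructor
    · intro hx
      obtain ⟨k, hk⟩ := exists_nat_gt (dist x x₀)
      exact ⟨k, hx, by push_cast; linarith⟩
    · rintro ⟨k, hk, -⟩; exact hk
  have hdir : Directed (· ⊆ ·) (fun k : ℕ => E ∩ ball x₀ (k + 1)) := by
    intro i j
    refine ⟨max i j, inter_subset_inter_right _ ?_, inter_subset_inter_right _ ?_⟩ <;>
      exact ball_subset_ball (by push_cast; simp [le_max_left, le_max_right])
  have hsup : m E = ⨆ k : ℕ, m (E ∩ ball x₀ ((k : ℝ) + 1)) := by
    conv_lhs => rw [hcov]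
    exact hdir.measure_iUnion
  rw [hsup] at hr
  obtain ⟨k, hk⟩ := lt_iSup_iff.1 hr
  set B := ball x₀ ((k : ℝ) + 1) with hB
  haveI : IsFiniteMeasure (m.restrict B) :=
    ⟨by rw [Measure.restrict_apply_univ]; exact hm _ isBounded_ball⟩
  haveI := sigmaFinite_of_finiteOnBounded m hm x₀
  have hEB : (m.restrict B) (E ∩ B) = m (E ∩ B) := by
    rw [Measure.restrict_apply' measurableSet_ball, inter_assoc, inter_self]
  obtain ⟨K, hKsub, hKclosed, hK⟩ :=
    (hE.inter measurableSet_ball).exists_lt_isClosed_of_ne_top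
      (μ := m.restrict B) (by rw [hEB]; exact (hm _ (isBounded_ball.subset inter_subset_right)).ne)
      (r := r) (by rwa [hEB])
  have hKB : K ⊆ B := hKsub.trans inter_subset_right
  have hKm : (m.restrict B) K = m K := by
    rw [Measure.restrict_apply' measurableSet_ball, inter_eq_self_of_subset_left hKB]
  refine ⟨K, hKsub.trans inter_subset_left, hKclosed, isBounded_ball.subset hKB, ?_, ?_⟩
  · rwa [hKm] at hK
  · exact lt_of_le_of_lt (measure_mono hKB) (hm _ isBounded_ball)

lemma epos_coe (x : ℝ) : epos (x : EReal) = ENNReal.ofReal x := by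
  rw [epos, if_neg (by simp)] ; simp

lemma epos_bot : epos ⊥ = 0 := by
  rw [epos, if_neg (by simp)] ; simp

lemma epos_top : epos ⊤ = ⊤ := by rw [epos, if_pos rfl]

lemma monotone_epos : Monotone epos := by
  intro x y hxy
  induction y with
  | bot => rw [le_bot_iff] at hxy; subst hxy; exact le_rfl
  | top => rw [epos_top]; exact le_top
  | coe y =>
      induction x with
      | bot => rw [epos_bot]; exact zero_le
      | top => simp at hxy
      | coe x =>
          rw [epos_coe, epos_coe]
          exact ENNReal.ofReal_le_ofReal (by exact_mod_cast hxy)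

lemma coe_epos_sub (c : ℝ) :
    (epos (c : EReal) : EReal) - (epos (-(c : EReal)) : EReal) = (c : EReal) := by
  rw [← EReal.coe_neg, epos_coe, epos_coe, EReal.coe_ennreal_ofReal, EReal.coe_ennreal_ofReal]
  norm_cast
  rcases le_total c 0 with h | h
  · rw [max_eq_right h, max_eq_left (by linarith)]; ring
  · rw [max_eq_left h, max_eq_right (by linarith)]; ring

lemma le_eintegral {α : Type*} [MeasurableSpace α] (ν : Measure α) [IsProbabilityMeasure ν]
    {f : α → EReal} {c : EReal} (h : ∀ᵐ a ∂ν, c ≤ f a) : c ≤ eintegral ν f := by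
  induction c with
  | bot => exact bot_le
  | coe c =>
      have hA : epos (c : EReal) ≤ ∫⁻ a, epos (f a) ∂ν := by
        have h2 := lintegral_mono_ae (h.mono fun a ha => monotone_epos ha)
        simpa [lintegral_const, measure_univ] using h2
      have hB : (∫⁻ a, epos (-f a) ∂ν) ≤ epos (-(c : EReal)) := by
        have h2 := lintegral_mono_ae (h.mono fun a ha =>
          monotone_epos (EReal.neg_le_neg_iff.2 ha))
        simpa [lintegral_const, measure_univ] using h2
      calc (c : EReal) = (epos (c : EReal) : EReal) - (epos (-(c : EReal)) : EReal) :=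
            (coe_epos_sub c).symm
        _ ≤ eintegral ν f := EReal.sub_le_sub
            (EReal.coe_ennreal_le_coe_ennreal_iff.2 hA)
            (EReal.coe_ennreal_le_coe_ennreal_iff.2 hB)
  | top =>
      have hf : ∀ᵐ a ∂ν, f a = ⊤ := h.mono fun a ha => top_le_iff.1 ha
      have hA : ∫⁻ a, epos (f a) ∂ν = ⊤ := by
        rw [lintegral_congr_ae (hf.mono fun a ha => by rw [ha, epos_top])]
        simp [lintegral_const, measure_univ]
      have hB : ∫⁻ a, epos (-f a) ∂ν = 0 := by
        rw [lintegral_congr_ae (hf.mono fun a ha => by rw [ha, EReal.neg_top, epos_bot])]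
        simp
      rw [eintegral, hA, hB]
      simp

lemma rpow_le_cdCoeff {n : ℝ} (hn : 1 ≤ n) (ν : Measure (GeoSpace X))
    [IsProbabilityMeasure ν] {f : GeoSpace X → ℝ≥0∞} {J : ℝ≥0∞}
    (h : ∀ᵐ γ ∂ν, J ≤ f γ) : J ^ (1 / n) ≤ cdCoeff n ν f := by
  have hn0 : (0 : ℝ) < n⁻¹ := by
    have : (0:ℝ) < n := lt_of_lt_of_le zero_lt_one hn
    positivity
  have h1 : (ENNReal.log J : EReal) ≤ eintegral ν fun γ => ENNReal.log (f γ) :=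
    le_eintegral ν (h.mono fun γ hγ => ENNReal.log_monotone hγ)
  have h2 : ((n⁻¹ : ℝ) : EReal) * ENNReal.log J
      ≤ ((n⁻¹ : ℝ) : EReal) * eintegral ν fun γ => ENNReal.log (f γ) :=
    mul_le_mul_of_nonneg_left h1 (by exact_mod_cast hn0.le)
  have h3 : EReal.exp (((n⁻¹ : ℝ) : EReal) * ENNReal.log J) = J ^ (1 / n) := by
    rw [EReal.mul_comm, EReal.exp_mul, ENNReal.exp_log, one_div]
  calc J ^ (1 / n) = EReal.exp (((n⁻¹ : ℝ) : EReal) * ENNReal.log J) := h3.symm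
    _ ≤ cdCoeff n ν f := EReal.exp_monotone h2

lemma Ent_smul_restrict (m : Measure X) [SigmaFinite m] {K : Set X} (hK : MeasurableSet K)
    (h0 : m K ≠ 0) (hfin : m K ≠ ⊤) :
    Ent ((m K)⁻¹ • m.restrict K) m = ((-Real.log (m K).toReal : ℝ) : EReal) := by
  classical
  set c : ℝ≥0∞ := (m K)⁻¹ with hc
  have hμeq : (m K)⁻¹ • m.restrict K = m.withDensity (K.indicator fun _ => c) := by
    rw [withDensity_indicator hK, withDensity_const]
  have hac : (m K)⁻¹ • m.restrict K ≪ m := by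
    rw [hμeq]; exact withDensity_absolutelyContinuous m _
  have hmeas : Measurable (K.indicator fun _ : X => c) := measurable_const.indicator hK
  have hrn : ((m K)⁻¹ • m.restrict K).rnDeriv m =ᵐ[m] K.indicator fun _ => c := by
    rw [hμeq]; exact Measure.rnDeriv_withDensity m hmeas
  set μ := (m K)⁻¹ • m.restrict K with hμ
  have hcongr : (fun x => (μ.rnDeriv m x).toReal * Real.log (μ.rnDeriv m x).toReal)
      =ᵐ[m] K.indicator fun _ => c.toReal * Real.log c.toReal := by
    filter_upwards [hrn] with x hx
    rw [hx]
    by_cases hxK : x ∈ K <;> simp [hxK]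
  have hint : Integrable
      (fun x => (μ.rnDeriv m x).toReal * Real.log (μ.rnDeriv m x).toReal) m := by
    refine Integrable.congr ?_ hcongr.symm
    rw [integrable_indicator_iff hK]
    exact integrableOn_const hfin
  rw [Ent, if_pos ⟨hac, hint⟩]
  have hI : ∫ x, (μ.rnDeriv m x).toReal * Real.log (μ.rnDeriv m x).toReal ∂m
      = (m K).toReal • (c.toReal * Real.log c.toReal) := by
    rw [integral_congr_ae hcongr, integral_indicator_const _ hK]; rfl
  rw [hI]
  have ha : (0 : ℝ) < (m K).toReal := ENNReal.toReal_pos h0 hfin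
  have hct : c.toReal = (m K).toReal⁻¹ := by rw [hc, ENNReal.toReal_inv]
  rw [hct, smul_eq_mul, Real.log_inv]
  norm_cast
  rw [← mul_assoc, mul_inv_cancel₀ ha.ne', one_mul]

lemma UnE_smul_restrict (m : Measure X) [SigmaFinite m] {K : Set X} (hK : MeasurableSet K)
    (h0 : m K ≠ 0) (hfin : m K ≠ ⊤) {n : ℝ} :
    UnE n ((m K)⁻¹ • m.restrict K) m = m K ^ (1 / n) := by
  rw [UnE, Ent_smul_restrict m hK h0 hfin]
  have ha : (0 : ℝ) < (m K).toReal := ENNReal.toReal_pos h0 hfin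
  have hneg : -(((-Real.log (m K).toReal : ℝ) : EReal))
      = ((Real.log (m K).toReal : ℝ) : EReal) := by
    rw [← EReal.coe_neg, neg_neg]
  rw [hneg, ← ENNReal.log_pos_real' ha, EReal.mul_comm, EReal.exp_mul, ENNReal.exp_log, one_div]

lemma UnE_le_of_null_compl (m : Measure X) [SigmaFinite m] {μ : Measure X}
    [IsProbabilityMeasure μ] {Z : Set X} (hZ : MeasurableSet Z) (hμZ : μ Zᶜ = 0)
    (hfin : m Z ≠ ⊤) {n : ℝ} (hn : 1 ≤ n) : UnE n μ m ≤ m Z ^ (1 / n) := by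
  classical
  have hnpos : (0 : ℝ) < n := lt_of_lt_of_le zero_lt_one hn
  have hninv : (0 : ℝ) < n⁻¹ := by positivity
  rw [UnE]
  by_cases hcond : μ ≪ m ∧
      Integrable (fun x => (μ.rnDeriv m x).toReal * Real.log (μ.rnDeriv m x).toReal) m
  swap
  · rw [Ent, if_neg hcond, EReal.neg_top,
      EReal.coe_mul_bot_of_pos (by exact_mod_cast hninv), EReal.exp_bot]
    exact zero_le
  obtain ⟨hac, hint⟩ := hcond
  set g : X → ℝ := fun x => (μ.rnDeriv m x).toReal with hg
  set I : ℝ := ∫ x, g x * Real.log (g x) ∂m with hI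
  have hμZ1 : μ Z = 1 := by
    have h2 := measure_add_measure_compl (μ := μ) hZ
    rw [hμZ, add_zero, measure_univ] at h2
    exact h2
  have hmZ0 : m Z ≠ 0 := by
    intro h
    rw [hac h] at hμZ1
    exact zero_ne_one hμZ1
  have ha : (0 : ℝ) < (m Z).toReal := ENNReal.toReal_pos hmZ0 hfin
  have hrnmeas := μ.measurable_rnDeriv m
  have hwd : m.withDensity (μ.rnDeriv m) = μ := Measure.withDensity_rnDeriv_eq μ m hac
  have hlint : ∀ s : Set X, MeasurableSet s → ∫⁻ x in s, μ.rnDeriv m x ∂m = μ s := by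
    intro s hs
    rw [← withDensity_apply _ hs, hwd]
  have hzero : μ.rnDeriv m =ᵐ[m.restrict Zᶜ] 0 :=
    (lintegral_eq_zero_iff hrnmeas).1 (by rw [hlint Zᶜ hZ.compl, hμZ])
  -- the probability measure q
  set q : Measure X := (m Z)⁻¹ • m.restrict Z with hq
  haveI hqprob : IsProbabilityMeasure q := by
    constructor
    rw [hq, Measure.smul_apply, Measure.restrict_apply_univ, smul_eq_mul]
    exact ENNReal.inv_mul_cancel hmZ0 hfin
  haveI : NeZero q := ⟨IsProbabilityMeasure.ne_zero q⟩
  have hinv_ne_top : (m Z)⁻¹ ≠ ⊤ := by simp [hmZ0]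
  have hgae : ∀ᵐ x ∂q, g x ∈ Ici (0 : ℝ) := ae_of_all _ fun x => ENNReal.toReal_nonneg
  have hlint1 : ∫⁻ x in Z, μ.rnDeriv m x ∂m = 1 := by rw [hlint Z hZ, hμZ1]
  have hgint_m : Integrable g (m.restrict Z) := by
    refine integrable_toReal_of_lintegral_ne_top hrnmeas.aemeasurable.restrict ?_
    rw [hlint1]; exact one_ne_top
  have hgint : Integrable g q := by rw [hq]; exact hgint_m.smul_measure hinv_ne_top
  have hφint : Integrable (fun x => g x * Real.log (g x)) q := by
    rw [hq]; exact (hint.restrict (s := Z)).smul_measure hinv_ne_top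
  have havg_f : ∫ x, g x ∂q = (m Z).toReal⁻¹ := by
    rw [hq, integral_smul_measure, smul_eq_mul, ENNReal.toReal_inv]
    have h2 : ∫ x, g x ∂m.restrict Z = 1 := by
      rw [hg, integral_toReal hrnmeas.aemeasurable.restrict
        (ae_restrict_of_ae (μ.rnDeriv_lt_top m)), hlint1, ENNReal.toReal_one]
    rw [h2, mul_one]
  have havg_φ : ∫ x, g x * Real.log (g x) ∂q = (m Z).toReal⁻¹ * I := by
    rw [hq, integral_smul_measure, smul_eq_mul, ENNReal.toReal_inv]
    congr 1
    have hsplit := integral_add_compl hZ hint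
    have hcompl : ∫ x in Zᶜ, g x * Real.log (g x) ∂m = 0 := by
      refine integral_eq_zero_of_ae ?_
      filter_upwards [hzero] with x hx
      simp [hg, hx]
    rw [hI, ← hsplit, hcompl, add_zero]
  have hj := Real.convexOn_mul_log.map_average_le Real.continuous_mul_log.continuousOn
      isClosed_Ici hgae hgint hφint
  rw [average_eq_integral, average_eq_integral, havg_f] at hj
  have hj2 : (m Z).toReal⁻¹ * Real.log (m Z).toReal⁻¹ ≤ (m Z).toReal⁻¹ * I := by
    calc (m Z).toReal⁻¹ * Real.log (m Z).toReal⁻¹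
        ≤ ∫ x, g x * Real.log (g x) ∂q := hj
      _ = (m Z).toReal⁻¹ * I := havg_φ
  have key : -Real.log (m Z).toReal ≤ I := by
    have h3 := (mul_le_mul_iff_right₀ (inv_pos.2 ha)).1 hj2
    rwa [Real.log_inv] at h3
  have hEnt : Ent μ m = ((I : ℝ) : EReal) := by rw [Ent, if_pos ⟨hac, hint⟩]
  rw [hEnt]
  have hmono : ((n⁻¹ : ℝ) : EReal) * (-(I : EReal))
      ≤ ((n⁻¹ : ℝ) : EReal) * ((Real.log (m Z).toReal : ℝ) : EReal) := by
    refine mul_le_mul_of_nonneg_left ?_ (by exact_mod_cast hninv.le)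
    rw [← EReal.coe_neg]
    exact_mod_cast neg_le.1 key
  calc EReal.exp (((n⁻¹ : ℝ) : EReal) * (-(I : EReal)))
      ≤ EReal.exp (((n⁻¹ : ℝ) : EReal) * ((Real.log (m Z).toReal : ℝ) : EReal)) :=
        EReal.exp_monotone hmono
    _ = m Z ^ (1 / n) := by
        rw [← ENNReal.log_pos_real' ha, EReal.mul_comm, EReal.exp_mul, ENNReal.exp_log, one_div]

lemma ennreal_add_le_of_forall_lt {x y R : ℝ≥0∞} (hx : x ≤ R) (hy : y ≤ R)
    (h : ∀ u < x, ∀ v < y, u + v ≤ R) : x + y ≤ R := by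
  rcases eq_or_ne x 0 with rfl | hx0
  · simpa using hy
  rcases eq_or_ne y 0 with rfl | hy0
  · simpa using hx
  have hxe : x = ⨆ u ∈ Iio x, (u : ℝ≥0∞) := by rw [← sSup_eq_iSup, isLUB_Iio.sSup_eq]
  have hye : y = ⨆ v ∈ Iio y, (v : ℝ≥0∞) := by rw [← sSup_eq_iSup, isLUB_Iio.sSup_eq]
  calc x + y = (⨆ u ∈ Iio x, (u : ℝ≥0∞)) + ⨆ v ∈ Iio y, (v : ℝ≥0∞) := by rw [← hxe, ← hye]
  _ ≤ R := ENNReal.biSup_add_biSup_le (s := Iio x) (t := Iio y) (f := fun u => u)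
    (g := fun v => v) ⟨0, mem_Iio.2 (pos_iff_ne_zero.2 hx0)⟩
    ⟨0, mem_Iio.2 (pos_iff_ne_zero.2 hy0)⟩ h

lemma ennreal_rpow_iSup {ι : Sort*} (f : ι → ℝ≥0∞) {c : ℝ} (hc : 0 < c) :
    (⨆ i, f i) ^ c = ⨆ i, f i ^ c := by
  have h := map_iSup (ENNReal.orderIsoRpow c hc) f
  simp only [ENNReal.orderIsoRpow_apply] at h
  exact h

lemma mSupp_smul_restrict_closed (m : Measure X) {K : Set X} (hK : IsClosed K) (c : ℝ≥0∞) :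
    mSupp (c • m.restrict K) ⊆ K := by
  intro x hx
  by_contra hxK
  obtain ⟨r, hr, hball⟩ := Metric.isOpen_iff.1 hK.isOpen_compl x hxK
  have h0 := hx r hr
  rw [Measure.smul_apply, Measure.restrict_apply' hK.measurableSet, smul_eq_mul] at h0
  have : ball x r ∩ K = ∅ := by
    rw [eq_empty_iff_forall_notMem]
    rintro z ⟨hz1, hz2⟩
    exact hball hz1 hz2
  rw [this, measure_empty, mul_zero] at h0
  exact lt_irrefl _ h0

lemma mSupp_smul_restrict_subset_mSupp (m : Measure X) {K : Set X} (hK : MeasurableSet K)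
    {c : ℝ≥0∞} : mSupp (c • m.restrict K) ⊆ mSupp m := by
  intro x hx r hr
  have h0 := hx r hr
  rw [Measure.smul_apply, smul_eq_mul] at h0
  by_contra hm
  rw [not_lt, le_zero_iff] at hm
  have h1 : m.restrict K (ball x r) = 0 :=
    le_antisymm (le_trans (Measure.restrict_le_self _) hm.le) zero_le
  rw [h1, mul_zero] at h0
  exact lt_irrefl _ h0

lemma geval_zero (γ : GeoSpace X) : geval γ 0 = γ.1 0 := by
  rw [geval]
  congr 1
  exact Subtype.ext (by simp [Set.projIcc])

lemma geval_one (γ : GeoSpace X) : geval γ 1 = γ.1 1 := by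
  rw [geval]
  congr 1
  exact Subtype.ext (by simp [Set.projIcc])

lemma dist_geval_le (γ : GeoSpace X) (t : ℝ) :
    dist (geval γ t) (geval γ 0) ≤ dist (geval γ 0) (geval γ 1) := by
  rw [geval_zero, geval_one, geval]
  set p := Set.projIcc (0:ℝ) 1 zero_le_one t with hp
  have h2 := γ.2 p 0
  rw [h2]
  have hp0 : (0:ℝ) ≤ (p : ℝ) := p.2.1
  have hp1 : (p : ℝ) ≤ 1 := p.2.2
  have : |(p : ℝ) - ((0 : unitInterval) : ℝ)| ≤ 1 := by
    rw [Set.Icc.coe_zero, sub_zero, abs_of_nonneg hp0]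
    exact hp1
  calc |(p : ℝ) - ((0 : unitInterval) : ℝ)| * dist (γ.1 0) (γ.1 1)
      ≤ 1 * dist (γ.1 0) (γ.1 1) := by
        exact mul_le_mul_of_nonneg_right this dist_nonneg
    _ = dist (γ.1 0) (γ.1 1) := one_mul _

lemma isBounded_Zt (t : ℝ) {K0 K1 : Set X} (h0 : Bornology.IsBounded K0)
    (h1 : Bornology.IsBounded K1) (hne : K0.Nonempty) :
    Bornology.IsBounded (Zt t K0 K1) := by
  obtain ⟨c, hc⟩ := hne
  obtain ⟨r, hr⟩ := (h0.union h1).subset_closedBall c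
  refine (Metric.isBounded_closedBall (x := c) (r := 3 * r)).subset ?_
  rintro x ⟨γ, hγ0, hγ1, rfl⟩
  have h0' : dist (geval γ 0) c ≤ r := hr (Or.inl hγ0)
  have h1' : dist (geval γ 1) c ≤ r := hr (Or.inr hγ1)
  have hd01 : dist (geval γ 0) (geval γ 1) ≤ 2 * r := by
    calc dist (geval γ 0) (geval γ 1) ≤ dist (geval γ 0) c + dist c (geval γ 1) :=
          dist_triangle _ _ _
      _ ≤ r + r := add_le_add h0' (by rwa [dist_comm])
      _ = 2 * r := by ring
  have hkey := dist_geval_le γ t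
  rw [mem_closedBall]
  calc dist (geval γ t) c ≤ dist (geval γ t) (geval γ 0) + dist (geval γ 0) c :=
        dist_triangle _ _ _
    _ ≤ 2 * r + r := add_le_add (hkey.trans hd01) h0'
    _ = 3 * r := by ring

lemma master_estimate [TopologicalSpace.SeparableSpace X]
    (m : Measure X) (hm : FiniteOnBounded m) (G : X → X → ℝ≥0∞)
    (b : ℝ → ℝ≥0∞ → ℝ≥0∞) {n : ℝ} (hn : 1 ≤ n) (hCD : CD m G b n)
    {A0 A1 : Set X} (hA0 : MeasurableSet A0) (hA1 : MeasurableSet A1)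
    (hA0pos : 0 < m A0) (hA1pos : 0 < m A1) (hinter : m (A0 ∩ A1) = 0)
    {t : ℝ} (ht : t ∈ Set.Ioo (0:ℝ) 1)
    {D0 D1 C0 C1 : Set X}
    (hD0 : D0 ⊆ A0) (hD0n : m (A0 \ D0) = 0)
    (hD1 : D1 ⊆ A1) (hD1n : m (A1 \ D1) = 0)
    (hC0 : C0 ⊆ A0) (hC0n : m (A0 \ C0) = 0)
    (hC1 : C1 ⊆ A1) (hC1n : m (A1 \ C1) = 0)
    {r0 r1 : ℝ≥0∞} (hr0 : r0 < m A0) (hr1 : r1 < m A1) :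
    (⨅ x0 ∈ D1 ∩ mSupp m, ⨅ x1 ∈ D0 ∩ mSupp m, b (1 - t) (G x0 x1)) ^ (1/n) * r0 ^ (1/n)
      + (⨅ x0 ∈ C0 ∩ mSupp m, ⨅ x1 ∈ C1 ∩ mSupp m, b t (G x0 x1)) ^ (1/n) * r1 ^ (1/n)
      ≤ m (Zt t A0 A1) ^ (1/n) := by
  classical
  set J1 := ⨅ x0 ∈ D1 ∩ mSupp m, ⨅ x1 ∈ D0 ∩ mSupp m, b (1 - t) (G x0 x1) with hJ1
  set J0 := ⨅ x0 ∈ C0 ∩ mSupp m, ⨅ x1 ∈ C1 ∩ mSupp m, b t (G x0 x1) with hJ0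
  have hnpos : (0:ℝ) < n := lt_of_lt_of_le zero_lt_one hn
  have h1n : (0:ℝ) < 1 / n := by positivity
  obtain ⟨x₀, hx₀⟩ : A0.Nonempty := nonempty_of_measure_ne_zero hA0pos.ne'
  haveI := sigmaFinite_of_finiteOnBounded m hm x₀
  set S := mSupp m with hS
  have hSm : MeasurableSet Sᶜ := (isClosed_mSupp m).measurableSet.compl
  have hSnull : m Sᶜ = 0 := measure_compl_mSupp m
  -- good measurable subsets E0, E1
  set N0 : Set X := toMeasurable m (A0 \ D0) ∪ toMeasurable m (A0 \ C0) ∪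
    toMeasurable m (A0 ∩ A1) ∪ Sᶜ with hN0
  have hN0m : MeasurableSet N0 :=
    (((measurableSet_toMeasurable _ _).union (measurableSet_toMeasurable _ _)).union
      (measurableSet_toMeasurable _ _)).union hSm
  have hN0null : m N0 = 0 := by
    rw [hN0]
    refine measure_union_null (measure_union_null (measure_union_null ?_ ?_) ?_) hSnull <;>
      rw [measure_toMeasurable] <;> assumption
  set E0 := A0 \ N0 with hE0def
  have hE0m : MeasurableSet E0 := hA0.diff hN0m
  have hE0meas : m E0 = m A0 := measure_diff_null hN0null
  have hE0D0 : E0 ⊆ D0 := by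
    rintro x ⟨hxA, hxN⟩
    by_contra hxD
    exact hxN (Or.inl (Or.inl (Or.inl (subset_toMeasurable m _ ⟨hxA, hxD⟩))))
  have hE0C0 : E0 ⊆ C0 := by
    rintro x ⟨hxA, hxN⟩
    by_contra hxC
    exact hxN (Or.inl (Or.inl (Or.inr (subset_toMeasurable m _ ⟨hxA, hxC⟩))))
  have hE0S : E0 ⊆ S := by
    rintro x ⟨hxA, hxN⟩
    by_contra hxS
    exact hxN (Or.inr hxS)
  have hE0A1 : E0 ∩ A1 = ∅ := by
    rw [eq_empty_iff_forall_notMem]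
    rintro x ⟨⟨hxA, hxN⟩, hxA1⟩
    exact hxN (Or.inl (Or.inr (subset_toMeasurable m _ ⟨hxA, hxA1⟩)))
  set N1 : Set X := toMeasurable m (A1 \ D1) ∪ toMeasurable m (A1 \ C1) ∪ Sᶜ with hN1
  have hN1m : MeasurableSet N1 :=
    ((measurableSet_toMeasurable _ _).union (measurableSet_toMeasurable _ _)).union hSm
  have hN1null : m N1 = 0 := by
    rw [hN1]
    refine measure_union_null (measure_union_null ?_ ?_) hSnull <;>
      rw [measure_toMeasurable] <;> assumption
  set E1 := A1 \ N1 with hE1def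
  have hE1m : MeasurableSet E1 := hA1.diff hN1m
  have hE1meas : m E1 = m A1 := measure_diff_null hN1null
  have hE1D1 : E1 ⊆ D1 := by
    rintro x ⟨hxA, hxN⟩
    by_contra hxD
    exact hxN (Or.inl (Or.inl (subset_toMeasurable m _ ⟨hxA, hxD⟩)))
  have hE1C1 : E1 ⊆ C1 := by
    rintro x ⟨hxA, hxN⟩
    by_contra hxC
    exact hxN (Or.inl (Or.inr (subset_toMeasurable m _ ⟨hxA, hxC⟩)))
  have hE1S : E1 ⊆ S := by
    rintro x ⟨hxA, hxN⟩
    by_contra hxS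
    exact hxN (Or.inr hxS)
  -- compact-like closed bounded pieces
  obtain ⟨K0, hK0E, hK0cl, hK0bd, hK0r, hK0fin⟩ :=
    exists_closed_bounded_subset m hm x₀ hE0m (r := r0) (hE0meas ▸ hr0)
  obtain ⟨K1, hK1E, hK1cl, hK1bd, hK1r, hK1fin⟩ :=
    exists_closed_bounded_subset m hm x₀ hE1m (r := r1) (hE1meas ▸ hr1)
  have hK0pos : m K0 ≠ 0 := (lt_of_le_of_lt zero_le hK0r).ne'
  have hK1pos : m K1 ≠ 0 := (lt_of_le_of_lt zero_le hK1r).ne'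
  have hK0A0 : K0 ⊆ A0 := hK0E.trans diff_subset
  have hK1A1 : K1 ⊆ A1 := hK1E.trans diff_subset
  have hK01 : K0 ∩ K1 = ∅ := by
    rw [eq_empty_iff_forall_notMem]
    rintro x ⟨h0, h1⟩
    have : x ∈ E0 ∩ A1 := ⟨hK0E h0, hK1A1 h1⟩
    rw [hE0A1] at this
    exact this
  -- the two probability measures
  set μ0 : Measure X := (m K0)⁻¹ • m.restrict K0 with hμ0
  set μ1 : Measure X := (m K1)⁻¹ • m.restrict K1 with hμ1
  haveI hμ0p : IsProbabilityMeasure μ0 := by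
    constructor
    rw [hμ0, Measure.smul_apply, Measure.restrict_apply_univ, smul_eq_mul]
    exact ENNReal.inv_mul_cancel hK0pos hK0fin.ne
  haveI hμ1p : IsProbabilityMeasure μ1 := by
    constructor
    rw [hμ1, Measure.smul_apply, Measure.restrict_apply_univ, smul_eq_mul]
    exact ENNReal.inv_mul_cancel hK1pos hK1fin.ne
  have hμ0supp : mSupp μ0 ⊆ K0 := mSupp_smul_restrict_closed m hK0cl _
  have hμ1supp : mSupp μ1 ⊆ K1 := mSupp_smul_restrict_closed m hK1cl _
  have hμ0Pbs : μ0 ∈ Pbs m :=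
    ⟨hμ0p, hK0bd.subset hμ0supp, mSupp_smul_restrict_subset_mSupp m hK0cl.measurableSet⟩
  have hμ1Pbs : μ1 ∈ Pbs m :=
    ⟨hμ1p, hK1bd.subset hμ1supp, mSupp_smul_restrict_subset_mSupp m hK1cl.measurableSet⟩
  have hμ1Star : μ1 ∈ PbsStar m := by
    refine ⟨hμ1Pbs, ?_⟩
    rw [hμ1, Ent_smul_restrict m hK1cl.measurableSet hK1pos hK1fin.ne]
    exact EReal.coe_ne_top _
  have hdisj : mSupp μ0 ∩ mSupp μ1 = ∅ := by
    rw [← subset_empty_iff, ← hK01]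
    exact inter_subset_inter hμ0supp hμ1supp
  obtain ⟨ν, hνopt, hνineq⟩ := hCD μ0 hμ0Pbs μ1 hμ1Star hdisj
  obtain ⟨hνprob, hν0, hν1, -⟩ := hνopt
  haveI := hνprob
  have hpair : Measurable (fun γ : GeoSpace X => (geval γ 0, geval γ 1)) :=
    (measurable_geval 0).prodMk (measurable_geval 1)
  have hmap0 : ν.map (fun γ => geval γ 0) = μ0 := by
    rw [← hν0, Measure.map_map measurable_fst hpair]
    rfl
  have hmap1 : ν.map (fun γ => geval γ 1) = μ1 := by
    rw [← hν1, Measure.map_map measurable_snd hpair]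
    rfl
  have hae0 : ∀ᵐ γ ∂ν, geval γ 0 ∈ K0 := by
    have h2 : ν.map (fun γ => geval γ 0) K0ᶜ = 0 := by
      rw [hmap0, hμ0, Measure.smul_apply, Measure.restrict_apply' hK0cl.measurableSet,
        compl_inter_self, measure_empty, smul_eq_mul, mul_zero]
    rw [Measure.map_apply (measurable_geval 0) hK0cl.measurableSet.compl] at h2
    exact h2
  have hae1 : ∀ᵐ γ ∂ν, geval γ 1 ∈ K1 := by
    have h2 : ν.map (fun γ => geval γ 1) K1ᶜ = 0 := by
      rw [hmap1, hμ1, Measure.smul_apply, Measure.restrict_apply' hK1cl.measurableSet,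
        compl_inter_self, measure_empty, smul_eq_mul, mul_zero]
    rw [Measure.map_apply (measurable_geval 1) hK1cl.measurableSet.compl] at h2
    exact h2
  -- coefficient bounds
  have hcoef1 : ∀ᵐ γ ∂ν, J1 ≤ b (1 - t) (G (geval γ 1) (geval γ 0)) := by
    filter_upwards [hae0, hae1] with γ h0 h1
    have hx : geval γ 1 ∈ D1 ∩ mSupp m := ⟨hE1D1 (hK1E h1), hE1S (hK1E h1)⟩
    have hy : geval γ 0 ∈ D0 ∩ mSupp m := ⟨hE0D0 (hK0E h0), hE0S (hK0E h0)⟩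
    exact le_trans (iInf₂_le _ hx) (iInf₂_le _ hy)
  have hcoef0 : ∀ᵐ γ ∂ν, J0 ≤ b t (G (geval γ 0) (geval γ 1)) := by
    filter_upwards [hae0, hae1] with γ h0 h1
    have hx : geval γ 0 ∈ C0 ∩ mSupp m := ⟨hE0C0 (hK0E h0), hE0S (hK0E h0)⟩
    have hy : geval γ 1 ∈ C1 ∩ mSupp m := ⟨hE1C1 (hK1E h1), hE1S (hK1E h1)⟩
    exact le_trans (iInf₂_le _ hx) (iInf₂_le _ hy)
  have hc1 : J1 ^ (1/n) ≤ cdCoeff n ν (fun γ => b (1 - t) (G (geval γ 1) (geval γ 0))) :=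
    rpow_le_cdCoeff hn ν hcoef1
  have hc0 : J0 ^ (1/n) ≤ cdCoeff n ν (fun γ => b t (G (geval γ 0) (geval γ 1))) :=
    rpow_le_cdCoeff hn ν hcoef0
  have hU0 : UnE n μ0 m = m K0 ^ (1/n) := by
    rw [hμ0]; exact UnE_smul_restrict m hK0cl.measurableSet hK0pos hK0fin.ne
  have hU1 : UnE n μ1 m = m K1 ^ (1/n) := by
    rw [hμ1]; exact UnE_smul_restrict m hK1cl.measurableSet hK1pos hK1fin.ne
  -- intermediate-point measure bound
  set μt := ν.map (fun γ => geval γ t) with hμt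
  haveI : IsProbabilityMeasure μt :=
    Measure.isProbabilityMeasure_map (measurable_geval t).aemeasurable
  set ZK := Zt t K0 K1 with hZK
  have hZKsub : ZK ⊆ Zt t A0 A1 := by
    rintro x ⟨γ, h0, h1, he⟩
    exact ⟨γ, hK0A0 h0, hK1A1 h1, he⟩
  have hZKbd : Bornology.IsBounded ZK :=
    isBounded_Zt t hK0bd hK1bd (nonempty_of_measure_ne_zero hK0pos)
  set Z' := toMeasurable m ZK with hZ'
  have hZ'm : MeasurableSet Z' := measurableSet_toMeasurable _ _
  have hμtZ' : μt Z'ᶜ = 0 := by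
    rw [hμt, Measure.map_apply (measurable_geval t) hZ'm.compl]
    have hsub : (fun γ => geval γ t) ⁻¹' Z'ᶜ ⊆ {γ | ¬ geval γ t ∈ ZK} :=
      fun γ hγ h => hγ (subset_toMeasurable m ZK h)
    refine measure_mono_null hsub ?_
    rw [← ae_iff]
    filter_upwards [hae0, hae1] with γ h0 h1
    exact ⟨γ, h0, h1, rfl⟩
  have hZ'fin : m Z' ≠ ⊤ := by
    rw [hZ', measure_toMeasurable]
    exact (hm _ hZKbd).ne
  have hUt : UnE n μt m ≤ m Z' ^ (1/n) := UnE_le_of_null_compl m hZ'm hμtZ' hZ'fin hn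
  have hZ'le : m Z' ≤ m (Zt t A0 A1) := by
    rw [hZ', measure_toMeasurable]
    exact measure_mono hZKsub
  -- final chain
  calc J1 ^ (1/n) * r0 ^ (1/n) + J0 ^ (1/n) * r1 ^ (1/n)
      ≤ J1 ^ (1/n) * m K0 ^ (1/n) + J0 ^ (1/n) * m K1 ^ (1/n) := by
        gcongr <;> exact ENNReal.rpow_le_rpow (by assumption_mod_cast; ) h1n.le
    _ ≤ cdCoeff n ν (fun γ => b (1 - t) (G (geval γ 1) (geval γ 0))) * UnE n μ0 m
        + cdCoeff n ν (fun γ => b t (G (geval γ 0) (geval γ 1))) * UnE n μ1 m := by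
        rw [hU0, hU1]
        exact add_le_add (mul_le_mul_left hc1 _) (mul_le_mul_left hc0 _)
    _ ≤ UnE n (ν.map fun γ => geval γ t) m := hνineq t ht
    _ ≤ m Z' ^ (1/n) := hUt
    _ ≤ m (Zt t A0 A1) ^ (1/n) := ENNReal.rpow_le_rpow hZ'le h1n.le

lemma mul_rpow_eq_iSup (c w : ℝ≥0∞) {e : ℝ} (he : 0 < e) :
    c * w ^ e = ⨆ r, ⨆ _ : r ∈ Iio w, c * r ^ e := by
  conv_lhs => rw [show w = ⨆ r ∈ Iio w, (r : ℝ≥0∞) by rw [← sSup_eq_iSup, isLUB_Iio.sSup_eq]]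
  rw [ennreal_rpow_iSup _ he, ENNReal.mul_iSup]
  congr 1
  funext r
  rw [ennreal_rpow_iSup _ he, ENNReal.mul_iSup]

end Helpers

/-- Generalized Brunn–Minkowski inequality. -/
theorem generalized_brunn_minkowski {X : Type*} [MetricSpace X] [MeasurableSpace X]
    [BorelSpace X] [CompleteSpace X] [TopologicalSpace.SeparableSpace X]
    (m : Measure X) (hm : FiniteOnBounded m) (G : X → X → ℝ≥0∞)
    (s : ℝ → ℝ) (N : ℝ) (hsN : DistortionData s N)
    (n : ℝ) (hn : 1 ≤ n) (hCD : CD m G (beta s N) n)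
    (A0 A1 : Set X) (hA0 : MeasurableSet A0) (hA1 : MeasurableSet A1)
    (hA0pos : 0 < m A0) (hA1pos : 0 < m A1) (hinter : m (A0 ∩ A1) = 0) :
    ∀ t ∈ Set.Ioo (0:ℝ) 1,
      betaSet m G (beta s N (1 - t)) A1 A0 ^ (1 / n) * m A0 ^ (1 / n)
          + betaSet m G (beta s N t) A0 A1 ^ (1 / n) * m A1 ^ (1 / n)
        ≤ m (Zt t A0 A1) ^ (1 / n) := by
  intro t ht
  classical
  have hnpos : (0:ℝ) < n := lt_of_lt_of_le zero_lt_one hn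
  have h1n : (0:ℝ) < 1 / n := by positivity
  set R := m (Zt t A0 A1) ^ (1 / n) with hR
  have key2 : ∀ D1 D0 C0 C1 : Set X, D1 ⊆ A1 → m (A1 \ D1) = 0 → D0 ⊆ A0 →
      m (A0 \ D0) = 0 → C0 ⊆ A0 → m (A0 \ C0) = 0 → C1 ⊆ A1 → m (A1 \ C1) = 0 →
      (⨅ x0 ∈ D1 ∩ mSupp m, ⨅ x1 ∈ D0 ∩ mSupp m, beta s N (1 - t) (G x0 x1)) ^ (1/n)
          * m A0 ^ (1/n)
        + (⨅ x0 ∈ C0 ∩ mSupp m, ⨅ x1 ∈ C1 ∩ mSupp m, beta s N t (G x0 x1)) ^ (1/n)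
          * m A1 ^ (1/n) ≤ R := by
    intro D1 D0 C0 C1 h1 h2 h3 h4 h5 h6 h7 h8
    have key : ∀ r0 r1 : ℝ≥0∞, r0 < m A0 → r1 < m A1 →
        (⨅ x0 ∈ D1 ∩ mSupp m, ⨅ x1 ∈ D0 ∩ mSupp m, beta s N (1 - t) (G x0 x1)) ^ (1/n)
            * r0 ^ (1/n)
          + (⨅ x0 ∈ C0 ∩ mSupp m, ⨅ x1 ∈ C1 ∩ mSupp m, beta s N t (G x0 x1)) ^ (1/n)
            * r1 ^ (1/n) ≤ R := by
      intro r0 r1 hr0 hr1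
      exact master_estimate m hm G (beta s N) hn hCD hA0 hA1 hA0pos hA1pos hinter ht
        h3 h4 h1 h2 h5 h6 h7 h8 hr0 hr1
    rw [mul_rpow_eq_iSup _ _ h1n, mul_rpow_eq_iSup _ _ h1n]
    refine ennreal_add_le_of_forall_lt ?_ ?_ ?_
    · refine iSup_le fun r0 => iSup_le fun hr0 => ?_
      exact le_trans (self_le_add_right _ _) (key r0 0 hr0 hA1pos)
    · refine iSup_le fun r1 => iSup_le fun hr1 => ?_
      exact le_trans (self_le_add_left _ _) (key 0 r1 hA0pos hr1)
    · intro u hu v hv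
      simp only [lt_iSup_iff] at hu hv
      obtain ⟨r0, hr0, hu⟩ := hu
      obtain ⟨r1, hr1, hv⟩ := hv
      exact le_trans (add_le_add hu.le hv.le) (key r0 r1 hr0 hr1)
  rcases eq_or_ne R ⊤ with hRtop | hRtop
  · exact hRtop ▸ le_top
  have hpowT : ∀ f : Set X → ℝ≥0∞, (⨆ i, f i) ^ (1/n) = ⨆ i, f i ^ (1/n) :=
    fun f => ennreal_rpow_iSup f h1n
  have hpowP : ∀ (p : Prop) (f : p → ℝ≥0∞), (⨆ i, f i) ^ (1/n) = ⨆ i, f i ^ (1/n) :=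
    fun p f => ennreal_rpow_iSup f h1n
  rw [betaSet, betaSet]
  simp only [hpowT, hpowP, ENNReal.iSup_mul]
  refine ennreal_add_le_of_forall_lt ?_ ?_ ?_
  · refine iSup_le fun D1 => iSup_le fun hD1 => iSup_le fun hD1ne => iSup_le fun hD1null =>
      iSup_le fun D0 => iSup_le fun hD0 => iSup_le fun hD0ne => iSup_le fun hD0null => ?_
    exact le_trans (self_le_add_right _ _)
      (key2 D1 D0 A0 A1 hD1 hD1null hD0 hD0null subset_rfl (by simp) subset_rfl (by simp))
  · refine iSup_le fun C0 => iSup_le fun hC0 => iSup_le fun hC0ne => iSup_le fun hC0null =>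
      iSup_le fun C1 => iSup_le fun hC1 => iSup_le fun hC1ne => iSup_le fun hC1null => ?_
    exact le_trans (self_le_add_left _ _)
      (key2 A1 A0 C0 C1 subset_rfl (by simp) subset_rfl (by simp) hC0 hC0null hC1 hC1null)
  · intro u hu v hv
    simp only [lt_iSup_iff] at hu hv
    obtain ⟨D1, hD1, hD1ne, hD1null, D0, hD0, hD0ne, hD0null, hu⟩ := hu
    obtain ⟨C0, hC0, hC0ne, hC0null, C1, hC1, hC1ne, hC1null, hv⟩ := hv
    exact le_trans (add_le_add hu.le hv.le)
      (key2 D1 D0 C0 C1 hD1 hD1null hD0 hD0null hC0 hC0null hC1 hC1null)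

end GMMS
end
end

section
/- Geodesic dimension bounds Hausdorff dimension from above: let (X,d,m) be a metric measure space. Then for every Borel set S ⊆ X one has dim_geo(S) ≥ dim_H(S), where dim_H denotes Hausdorff dimension. -/
open MeasureTheory Filter Set Metric ENNReal Topology

noncomputable section

namespace GMMS

variable {X : Type*}

section Aux

variable {X : Type*}

/-- A Frostman-type lemma: if every point of a bounded set `E` has frequently (as `r → 0⁺`)
`ε r^σ ≤ m(closedBall x r)`, then `dimH E ≤ σ`. -/
lemma frostman_aux [MetricSpace X] [MeasurableSpace X] [BorelSpace X]
    (m : Measure X) {σ : ℝ} (hσ : 0 < σ) {ε : ℝ≥0∞} (hε0 : ε ≠ 0) (hεtop : ε ≠ ⊤)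
    {E : Set X} (hfin : m (Metric.cthickening 1 E) ≠ ⊤)
    (hfreq : ∀ x ∈ E, ∃ᶠ r in 𝓝[>] (0:ℝ),
      ε * ENNReal.ofReal (r ^ σ) ≤ m (Metric.closedBall x r)) :
    dimH E ≤ ENNReal.ofReal σ := by
  -- choose radii
  have key : ∀ n : ℕ, ∀ x, x ∈ E → ∃ ρ : ℝ, 0 < ρ ∧ ρ ≤ ((n : ℝ) + 1)⁻¹ ∧
      ε * ENNReal.ofReal (ρ ^ σ) ≤ m (Metric.closedBall x ρ) := by
    intro n x hx
    have hmem : Set.Ioc (0:ℝ) ((n : ℝ) + 1)⁻¹ ∈ 𝓝[>] (0:ℝ) :=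
      Ioc_mem_nhdsGT_of_mem ⟨le_rfl, by positivity⟩
    rcases ((hfreq x hx).and_eventually (eventually_mem_set.mpr hmem)).exists with
      ⟨ρ, h1, h2⟩
    exact ⟨ρ, h2.1, h2.2, h1⟩
  choose! ρ hρpos hρle hρm using key
  -- Vitali covering at each scale
  have V : ∀ n : ℕ, ∃ u, u ⊆ E ∧ (u.PairwiseDisjoint fun a => Metric.closedBall a (ρ n a)) ∧
      ∀ a ∈ E, ∃ b ∈ u, Metric.closedBall a (ρ n a) ⊆ Metric.closedBall b (4 * ρ n b) := by
    intro n
    rcases Vitali.exists_disjoint_subfamily_covering_enlargement_closedBall E (fun a => a) (ρ n)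
      (((n : ℝ) + 1)⁻¹) (fun a ha => hρle n a ha) 4 (by norm_num) with ⟨u, hu1, hu2, hu3⟩
    exact ⟨u, hu1, hu2, hu3⟩
  choose u huE hudisj hucov using V
  have hball_sub : ∀ n, ∀ b ∈ u n, Metric.closedBall b (ρ n b) ⊆ Metric.cthickening 1 E := by
    intro n b hb
    refine (Metric.closedBall_subset_cthickening (huE n hb) (ρ n b)).trans
      (Metric.cthickening_mono ?_ E)
    have h1 : ((n : ℝ) + 1)⁻¹ ≤ 1 := by
      rw [inv_le_one_iff₀]; right; linarith [Nat.cast_nonneg (α := ℝ) n]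
    exact (hρle n b (huE n hb)).trans h1
  have hdisj : ∀ n, Pairwise (Function.onFun Disjoint fun i : (u n) =>
      Metric.closedBall (i : X) (ρ n (i : X))) := by
    intro n
    exact (hudisj n).subtype _ _
  have hiUnion_fin : ∀ n, m (⋃ i : (u n), Metric.closedBall (i : X) (ρ n (i : X))) ≠ ⊤ := by
    intro n
    refine ne_top_of_le_ne_top hfin (measure_mono ?_)
    exact Set.iUnion_subset fun i => hball_sub n i i.2
  have hcnt : ∀ n : ℕ, Countable (u n) := by
    intro n
    have := MeasureTheory.Measure.countable_meas_pos_of_disjoint_of_meas_iUnion_ne_top m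
      (As := fun i : (u n) => Metric.closedBall (i : X) (ρ n (i : X)))
      (fun i => measurableSet_closedBall) (hdisj n) (hiUnion_fin n)
    have hall : {i : (u n) | 0 < m (Metric.closedBall (i : X) (ρ n (i : X)))} = Set.univ := by
      refine Set.eq_univ_of_forall fun i => ?_
      have h1 : (0:ℝ≥0∞) < ε * ENNReal.ofReal (ρ n (i : X) ^ σ) := by
        refine ENNReal.mul_pos hε0 ?_
        have := Real.rpow_pos_of_pos (hρpos n (i : X) (huE n i.2)) σ
        simp [ENNReal.ofReal_pos, this]
      exact lt_of_lt_of_le h1 (hρm n (i : X) (huE n i.2))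
    rw [hall] at this
    exact Set.countable_univ_iff.mp this
  -- bound the Hausdorff measure
  set L : ℝ≥0∞ := ENNReal.ofReal ((8:ℝ) ^ σ) * ε⁻¹ * m (Metric.cthickening 1 E) with hL
  have hsum : ∀ n : ℕ,
      (∑' i : (u n), EMetric.diam (Metric.closedBall (i : X) (4 * ρ n (i : X))) ^ σ) ≤ L := by
    intro n
    haveI := hcnt n
    have hpt : ∀ i : (u n),
        EMetric.diam (Metric.closedBall (i : X) (4 * ρ n (i : X))) ^ σ ≤
          ENNReal.ofReal ((8:ℝ) ^ σ) * (ε⁻¹ * m (Metric.closedBall (i : X) (ρ n (i : X)))) := by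
      intro i
      have hρ0 : 0 < ρ n (i : X) := hρpos n (i : X) (huE n i.2)
      have hd : EMetric.diam (Metric.closedBall (i : X) (4 * ρ n (i : X))) ≤
          ENNReal.ofReal (8 * ρ n (i : X)) := by
        rw [← Metric.emetric_closedBall (by positivity : (0:ℝ) ≤ 4 * ρ n (i : X))]
        calc EMetric.diam (EMetric.closedBall (i : X) (ENNReal.ofReal (4 * ρ n (i : X))))
            ≤ 2 * ENNReal.ofReal (4 * ρ n (i : X)) := EMetric.diam_closedBall
          _ = ENNReal.ofReal (8 * ρ n (i : X)) := by
              rw [← ENNReal.ofReal_ofNat, ← ENNReal.ofReal_mul (by norm_num)]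
              ring_nf
      calc EMetric.diam (Metric.closedBall (i : X) (4 * ρ n (i : X))) ^ σ
          ≤ ENNReal.ofReal (8 * ρ n (i : X)) ^ σ := ENNReal.rpow_le_rpow hd hσ.le
        _ = ENNReal.ofReal ((8 * ρ n (i : X)) ^ σ) :=
            ENNReal.ofReal_rpow_of_pos (by positivity)
        _ = ENNReal.ofReal ((8:ℝ) ^ σ * ρ n (i : X) ^ σ) := by
            rw [Real.mul_rpow (by norm_num) hρ0.le]
        _ = ENNReal.ofReal ((8:ℝ) ^ σ) * ENNReal.ofReal (ρ n (i : X) ^ σ) :=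
            ENNReal.ofReal_mul (by positivity)
        _ ≤ ENNReal.ofReal ((8:ℝ) ^ σ) * (ε⁻¹ * m (Metric.closedBall (i : X) (ρ n (i : X)))) := by
            refine mul_le_mul_right ?_ _
            have h1 : ENNReal.ofReal (ρ n (i : X) ^ σ)
                = ε⁻¹ * (ε * ENNReal.ofReal (ρ n (i : X) ^ σ)) := by
              rw [← mul_assoc, ENNReal.inv_mul_cancel hε0 hεtop, one_mul]
            rw [h1]
            exact mul_le_mul_right (hρm n (i : X) (huE n i.2)) _
    calc (∑' i : (u n), EMetric.diam (Metric.closedBall (i : X) (4 * ρ n (i : X))) ^ σ)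
        ≤ ∑' i : (u n), ENNReal.ofReal ((8:ℝ) ^ σ) *
            (ε⁻¹ * m (Metric.closedBall (i : X) (ρ n (i : X)))) := ENNReal.tsum_le_tsum hpt
      _ = ENNReal.ofReal ((8:ℝ) ^ σ) * ε⁻¹ *
            ∑' i : (u n), m (Metric.closedBall (i : X) (ρ n (i : X))) := by
          rw [ENNReal.tsum_mul_left, ENNReal.tsum_mul_left, mul_assoc]
      _ = ENNReal.ofReal ((8:ℝ) ^ σ) * ε⁻¹ *
            m (⋃ i : (u n), Metric.closedBall (i : X) (ρ n (i : X))) := by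
          rw [measure_iUnion (hdisj n) fun i => measurableSet_closedBall]
      _ ≤ L := by
          refine mul_le_mul_right (measure_mono ?_) _
          exact Set.iUnion_subset fun i => hball_sub n i i.2
  have hH : μH[σ] E ≤ L := by
    haveI := hcnt
    refine le_trans (MeasureTheory.Measure.hausdorffMeasure_le_liminf_tsum (l := Filter.atTop) σ E
      (fun n : ℕ => ENNReal.ofReal (8 * ((n : ℝ) + 1)⁻¹)) ?_
      (fun n (i : (u n)) => Metric.closedBall (i : X) (4 * ρ n (i : X))) ?_ ?_) ?_
    · have h1 : Filter.Tendsto (fun n : ℕ => 8 * ((n : ℝ) + 1)⁻¹) Filter.atTop (𝓝 0) := by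
        have : Tendsto (fun n : ℕ => 1 / ((n : ℝ) + 1)) atTop (𝓝 0) :=
          tendsto_one_div_add_atTop_nhds_zero_nat
        have h2 := this.const_mul (8:ℝ)
        simpa [one_div, mul_zero] using h2
      have := (ENNReal.continuous_ofReal.tendsto 0).comp h1
      simpa only [ENNReal.ofReal_zero, Function.comp_def] using this
    · refine Filter.Eventually.of_forall fun n => fun i => ?_
      have hρ0 : 0 < ρ n (i : X) := hρpos n (i : X) (huE n i.2)
      have hd : EMetric.diam (Metric.closedBall (i : X) (4 * ρ n (i : X))) ≤
          ENNReal.ofReal (8 * ρ n (i : X)) := by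
        rw [← Metric.emetric_closedBall (by positivity : (0:ℝ) ≤ 4 * ρ n (i : X))]
        calc EMetric.diam (EMetric.closedBall (i : X) (ENNReal.ofReal (4 * ρ n (i : X))))
            ≤ 2 * ENNReal.ofReal (4 * ρ n (i : X)) := EMetric.diam_closedBall
          _ = ENNReal.ofReal (8 * ρ n (i : X)) := by
              rw [← ENNReal.ofReal_ofNat, ← ENNReal.ofReal_mul (by norm_num)]
              ring_nf
      refine hd.trans (ENNReal.ofReal_le_ofReal ?_)
      have := hρle n (i : X) (huE n i.2)
      nlinarith
    · refine Filter.Eventually.of_forall fun n => fun a ha => ?_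
      rcases hucov n a ha with ⟨b, hb, hsub⟩
      have : a ∈ Metric.closedBall b (4 * ρ n b) :=
        hsub (Metric.mem_closedBall_self (hρpos n a ha).le)
      exact Set.mem_iUnion.mpr ⟨⟨b, hb⟩, this⟩
    · refine le_trans (Filter.liminf_le_liminf (Filter.Eventually.of_forall hsum)) ?_
      simp [Filter.liminf_const]
  have hLt : L ≠ ⊤ := by
    refine ENNReal.mul_ne_top (ENNReal.mul_ne_top ENNReal.ofReal_ne_top ?_) hfin
    exact ENNReal.inv_ne_top.mpr hε0
  have hHne : μH[σ] E ≠ ⊤ := ne_top_of_le_ne_top hLt hH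
  have hcoe : ((σ.toNNReal : ℝ≥0∞)) = ENNReal.ofReal σ := rfl
  rw [← hcoe]
  refine dimH_le_of_hausdorffMeasure_ne_top ?_
  rwa [Real.coe_toNNReal σ hσ.le]

lemma geval_dist [MetricSpace X] (γ : GeoSpace X) {t : ℝ} (ht : t ∈ Set.Icc (0:ℝ) 1) :
    dist (geval γ t) (geval γ 0) = t * dist (geval γ 0) (geval γ 1) := by
  have h0 : Set.projIcc (0:ℝ) 1 zero_le_one 0 = 0 := by
    apply Subtype.ext; simp [Set.projIcc]
  have h1 : Set.projIcc (0:ℝ) 1 zero_le_one 1 = 1 := by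
    apply Subtype.ext; simp [Set.projIcc]
  have ht' : Set.projIcc (0:ℝ) 1 zero_le_one t = ⟨t, ht⟩ := Set.projIcc_of_mem _ ht
  rw [geval, geval, geval, h0, h1, ht', γ.2 ⟨t, ht⟩ 0]
  norm_num [abs_of_nonneg ht.1]

lemma csig_ne_top [MetricSpace X] [MeasurableSpace X] (m : Measure X) {σ : ℝ} {x : X}
    (h : Filter.limsup (fun r : ℝ => ENNReal.ofReal (r ^ (-σ)) * m (Metric.closedBall x r))
      (𝓝[>] (0:ℝ)) = 0) : Csig m σ x ≠ ⊤ := by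
  set G : ℝ → ℝ≥0∞ := fun r => ENNReal.ofReal (r ^ (-σ)) * m (Metric.closedBall x r) with hGdef
  have hG : Filter.Tendsto G (𝓝[>] (0:ℝ)) (𝓝 0) := by
    rw [ENNReal.tendsto_nhds_zero]
    intro δ hδ
    exact (Filter.eventually_lt_of_limsup_lt (by rw [h]; exact hδ)).mono fun r hr => hr.le
  have hle : Csig m σ x ≤ 0 := by
    refine iSup_le fun A => iSup_le fun _ => iSup_le fun hAb => iSup_le fun _ =>
      iSup_le fun hA0 => iSup_le fun _ => ?_
    obtain ⟨R, hR⟩ := hAb.subset_closedBall x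
    set D := max R 1 with hDdef
    have hD : (0:ℝ) < D := lt_of_lt_of_le one_pos (le_max_right _ _)
    have hsubA : A ⊆ Metric.closedBall x D :=
      hR.trans (Metric.closedBall_subset_closedBall (le_max_left _ _))
    set C : ℝ≥0∞ := ENNReal.ofReal (D ^ σ) / m A with hCdef
    have hCt : C ≠ ⊤ := (ENNReal.div_lt_top ENNReal.ofReal_ne_top hA0.ne').ne
    have hZsub : ∀ t ∈ Set.Ioo (0:ℝ) 1, Zt t {x} A ⊆ Metric.closedBall x (t * D) := by
      rintro t ht z ⟨γ, hγ0, hγ1, hγt⟩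
      have hx0 : geval γ 0 = x := hγ0
      have hdq : dist z x = t * dist x (geval γ 1) := by
        rw [← hγt, ← hx0, geval_dist γ ⟨ht.1.le, ht.2.le⟩, hx0]
      rw [Metric.mem_closedBall, hdq]
      have : dist x (geval γ 1) ≤ D := by
        rw [dist_comm]; exact hsubA hγ1
      exact mul_le_mul_of_nonneg_left this ht.1.le
    have hbound : ∀ᶠ t in 𝓝[>] (0:ℝ),
        ENNReal.ofReal (t ^ (-σ)) * m (Zt t {x} A) / m A ≤ C * G (t * D) := by
      filter_upwards [Filter.eventually_mem_set.mpr
        (Ioo_mem_nhdsGT_of_mem ⟨le_rfl, one_pos⟩)] with t ht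
      obtain ⟨ht0, ht1⟩ := ht
      have hofReal : ENNReal.ofReal (t ^ (-σ)) =
          ENNReal.ofReal ((t * D) ^ (-σ)) * ENNReal.ofReal (D ^ σ) := by
        rw [← ENNReal.ofReal_mul (Real.rpow_nonneg (by positivity) _)]
        congr 1
        rw [Real.mul_rpow ht0.le hD.le, mul_assoc, ← Real.rpow_add hD, neg_add_cancel,
          Real.rpow_zero, mul_one]
      calc ENNReal.ofReal (t ^ (-σ)) * m (Zt t {x} A) / m A
          ≤ ENNReal.ofReal (t ^ (-σ)) * m (Metric.closedBall x (t * D)) / m A := by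
            exact ENNReal.div_le_div_right
              (mul_le_mul_right (measure_mono (hZsub t ⟨ht0, ht1⟩)) _) _
        _ = C * G (t * D) := by
            rw [hofReal, hCdef, hGdef, div_eq_mul_inv, div_eq_mul_inv]
            ring
    have hmap : Filter.Tendsto (fun t : ℝ => t * D) (𝓝[>] (0:ℝ)) (𝓝[>] (0:ℝ)) := by
      rw [tendsto_nhdsWithin_iff]
      constructor
      · have h2 : Filter.Tendsto (fun t : ℝ => t * D) (𝓝 0) (𝓝 0) := by
          simpa using (continuous_mul_right D).tendsto (0:ℝ)
        exact h2.mono_left nhdsWithin_le_nhds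
      · filter_upwards [self_mem_nhdsWithin] with t ht
        exact mul_pos ht hD
    have htend : Filter.Tendsto (fun t : ℝ => C * G (t * D)) (𝓝[>] (0:ℝ)) (𝓝 0) := by
      have h2 := ENNReal.Tendsto.const_mul (hG.comp hmap) (Or.inr hCt)
      simpa using h2
    calc Filter.limsup (fun t : ℝ => ENNReal.ofReal (t ^ (-σ)) * m (Zt t {x} A) / m A)
          (𝓝[>] (0:ℝ)) ≤ Filter.limsup (fun t : ℝ => C * G (t * D)) (𝓝[>] (0:ℝ)) :=
          Filter.limsup_le_limsup hbound
      _ = 0 := htend.limsup_eq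
  intro hT
  rw [hT] at hle
  exact (not_le.mpr ENNReal.zero_lt_top) hle

end Aux

/-- The geodesic dimension bounds the Hausdorff dimension from above. -/
theorem dimH_le_dimGeo {X : Type*} [MetricSpace X] [MeasurableSpace X]
    [BorelSpace X] [CompleteSpace X] [TopologicalSpace.SeparableSpace X]
    (m : Measure X) (hm : FiniteOnBounded m) :
    ∀ S : Set X, MeasurableSet S → dimH S ≤ dimGeoS m S := by
  intro S _
  rcases S.eq_empty_or_nonempty with rfl | ⟨x₀, hx₀⟩
  · simp
  refine le_of_forall_gt_imp_ge_of_dense fun c hc => ?_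
  obtain ⟨σ, hσ0', h1, h2⟩ := ENNReal.lt_iff_exists_real_btwn.mp hc
  have hσ0 : 0 < σ := ENNReal.ofReal_pos.mp (zero_le.trans_lt h1)
  set T : ℕ × ℕ → Set X := fun p => {y | dist y x₀ ≤ (p.2 : ℝ) ∧
    ∃ᶠ r in 𝓝[>] (0:ℝ), ((p.1 : ℝ≥0∞) + 1)⁻¹ * ENNReal.ofReal (r ^ σ) ≤
      m (Metric.closedBall y r)} with hTdef
  have hsub : S ⊆ ⋃ p, T p := by
    intro x hx
    have hlt : dimGeo m x < ENNReal.ofReal σ :=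
      lt_of_le_of_lt (le_iSup₂ (f := fun x _ => dimGeo m x) x hx) h1
    obtain ⟨e, ⟨σ', ⟨hσ'0, hCsig⟩, rfl⟩, he⟩ :=
      sInf_lt_iff.mp (show sInf (ENNReal.ofReal '' {σ : ℝ | 0 < σ ∧ Csig m σ x = ⊤}) <
        ENNReal.ofReal σ from hlt)
    have hσ'σ : σ' < σ := by
      rwa [ENNReal.ofReal_lt_ofReal_iff_of_nonneg hσ'0.le] at he
    have hLx : Filter.limsup (fun r : ℝ => ENNReal.ofReal (r ^ (-σ')) *
        m (Metric.closedBall x r)) (𝓝[>] (0:ℝ)) ≠ 0 :=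
      fun h0 => csig_ne_top m h0 hCsig
    obtain ⟨n, hn⟩ := ENNReal.exists_inv_nat_lt hLx
    have hn' : ((n : ℝ≥0∞) + 1)⁻¹ < Filter.limsup (fun r : ℝ => ENNReal.ofReal (r ^ (-σ')) *
        m (Metric.closedBall x r)) (𝓝[>] (0:ℝ)) :=
      lt_of_le_of_lt (ENNReal.inv_le_inv.mpr le_self_add) hn
    have hfreq := Filter.frequently_lt_of_lt_limsup (by isBoundedDefault) hn'
    have hev : ∀ᶠ r in 𝓝[>] (0:ℝ), r ∈ Set.Ioo (0:ℝ) 1 :=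
      Filter.eventually_mem_set.mpr (Ioo_mem_nhdsGT_of_mem ⟨le_rfl, one_pos⟩)
    have hfreq2 : ∃ᶠ r in 𝓝[>] (0:ℝ), ((n : ℝ≥0∞) + 1)⁻¹ * ENNReal.ofReal (r ^ σ) ≤
        m (Metric.closedBall x r) := by
      refine (hfreq.and_eventually hev).mono ?_
      rintro r ⟨hr, hr0, hr1⟩
      have h3 : ((n : ℝ≥0∞) + 1)⁻¹ * ENNReal.ofReal (r ^ σ') ≤ m (Metric.closedBall x r) := by
        calc ((n : ℝ≥0∞) + 1)⁻¹ * ENNReal.ofReal (r ^ σ')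
            ≤ (ENNReal.ofReal (r ^ (-σ')) * m (Metric.closedBall x r)) *
              ENNReal.ofReal (r ^ σ') := mul_le_mul_left hr.le _
          _ = m (Metric.closedBall x r) := by
              rw [mul_comm (ENNReal.ofReal (r ^ (-σ'))) (m (Metric.closedBall x r)), mul_assoc,
                ← ENNReal.ofReal_mul (Real.rpow_nonneg hr0.le _), ← Real.rpow_add hr0,
                neg_add_cancel, Real.rpow_zero, ENNReal.ofReal_one, mul_one]
      refine le_trans (mul_le_mul_right (ENNReal.ofReal_le_ofReal ?_) _) h3
      exact Real.rpow_le_rpow_of_exponent_ge hr0 hr1.le hσ'σ.le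
    exact Set.mem_iUnion.mpr ⟨(n, ⌈dist x x₀⌉₊), ⟨Nat.le_ceil _, hfreq2⟩⟩
  have hdim : ∀ p : ℕ × ℕ, dimH (T p) ≤ ENNReal.ofReal σ := by
    intro p
    refine frostman_aux m hσ0 (ε := ((p.1 : ℝ≥0∞) + 1)⁻¹) ?_ ?_ ?_ ?_
    · exact ENNReal.inv_ne_zero.mpr (by simp)
    · refine ENNReal.inv_ne_top.mpr ?_
      simp
    · refine (hm _ ?_).ne
      refine Bornology.IsBounded.cthickening ?_
      refine (Metric.isBounded_closedBall (x := x₀) (r := (p.2 : ℝ))).subset ?_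
      intro y hy
      exact Metric.mem_closedBall.mpr hy.1
    · exact fun y hy => hy.2
  calc dimH S ≤ dimH (⋃ p, T p) := dimH_mono hsub
    _ = ⨆ p, dimH (T p) := dimH_iUnion T
    _ ≤ ENNReal.ofReal σ := iSup_le hdim
    _ ≤ c := h2.le

end GMMS
end
end
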